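/- arXiv:1307.1369 — 2 statements merged into one kernel-verified Lean document; each statement's English description precedes it below -/
import Mathlib

section
/- There exist δ₀ > 0 and a constant C > 0 such that for all 0 < δ ≤ δ₀, sup_{θ ∈ ℝ/Lℝ} max{ |b(θ) − b̃_δ(θ)|, |b'(θ) − b̃'_δ(θ)| } ≤ Cδ², where b(θ) := δ⟨G[q(θ)], q'(θ)⟩ and b̃_δ(θ) := ⟨−∇V[q̃_δ(θ)] + δG[q̃_δ(θ)], q̃'_δ(θ)/‖q̃'_δ(θ)‖⟩. -/
noncomputable section

open MeasureTheory Set Filter RealInnerProductSpace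

/-- The Hessian of `V` at `X`, as a continuous linear map. -/
def hessLM {n : ℕ} (V : EuclideanSpace ℝ (Fin n) → ℝ) (X : EuclideanSpace ℝ (Fin n)) :
    EuclideanSpace ℝ (Fin n) →L[ℝ] EuclideanSpace ℝ (Fin n) :=
  fderiv ℝ (gradient V) X

/-- The perturbed invariant curve `M^δ = {q θ + φ_δ θ}`. -/
def Mset {n : ℕ} (q : ℝ → EuclideanSpace ℝ (Fin n)) (Φ : ℝ → ℝ → EuclideanSpace ℝ (Fin n))
    (δ : ℝ) : Set (EuclideanSpace ℝ (Fin n)) :=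
  Set.range fun θ => q θ + Φ δ θ

/-- Invariance of a set under the flow `dX = (-∇V[X] + δ G[X]) dt`. -/
def flowInvariant {n : ℕ} (V : EuclideanSpace ℝ (Fin n) → ℝ)
    (G : EuclideanSpace ℝ (Fin n) → EuclideanSpace ℝ (Fin n)) (δ : ℝ)
    (S : Set (EuclideanSpace ℝ (Fin n))) : Prop :=
  ∀ Y : ℝ → EuclideanSpace ℝ (Fin n),
    (∀ t, HasDerivAt Y (-(gradient V (Y t)) + δ • G (Y t)) t) → Y 0 ∈ S → ∀ t, Y t ∈ S

/-- Costs of finite-time absolutely continuous paths from `P₁` to `P₂` for the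
rate function `I_{δ,T}`. -/
def rateSet {n : ℕ} (V : EuclideanSpace ℝ (Fin n) → ℝ)
    (G : EuclideanSpace ℝ (Fin n) → EuclideanSpace ℝ (Fin n)) (δ : ℝ)
    (P₁ P₂ : EuclideanSpace ℝ (Fin n)) : Set ℝ :=
  {c | ∃ T : ℝ, T < 0 ∧ ∃ Y g : ℝ → EuclideanSpace ℝ (Fin n),
      IntervalIntegrable g volume T 0 ∧
      (∀ t ∈ Icc T (0:ℝ), Y t = Y T + ∫ s in T..t, g s) ∧
      Y T = P₁ ∧ Y 0 = P₂ ∧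
      c = (1/2) * ∫ t in T..(0:ℝ), ‖g t + gradient V (Y t) - δ • G (Y t)‖^2}

/-- The quasipotential `W_δ(P₁, P₂)`. -/
def quasipotential {n : ℕ} (V : EuclideanSpace ℝ (Fin n) → ℝ)
    (G : EuclideanSpace ℝ (Fin n) → EuclideanSpace ℝ (Fin n)) (δ : ℝ)
    (P₁ P₂ : EuclideanSpace ℝ (Fin n)) : ℝ :=
  sInf (rateSet V G δ P₁ P₂)

/-- Costs of absolutely continuous paths on `ℝ/L_δℝ` (written through `L_δ`-periodic lifts)
from `φ₁` to `φ₂` for the reduced rate function. -/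
def redRateSet (bδ : ℝ → ℝ) (Lδ φ₁ φ₂ : ℝ) : Set ℝ :=
  {c | ∃ T : ℝ, T < 0 ∧ ∃ f g : ℝ → ℝ,
      IntervalIntegrable g volume T 0 ∧
      (∀ t ∈ Icc T (0:ℝ), f t = f T + ∫ s in T..t, g s) ∧
      (∃ k : ℤ, f T = φ₁ + k * Lδ) ∧ (∃ k : ℤ, f 0 = φ₂ + k * Lδ) ∧
      c = (1/2) * ∫ t in T..(0:ℝ), |g t - bδ (f t)|^2}

/-- The reduced quasipotential `W^red_δ(φ₁, φ₂)`. -/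
def redQuasipotential (bδ : ℝ → ℝ) (Lδ φ₁ φ₂ : ℝ) : ℝ :=
  sInf (redRateSet bδ Lδ φ₁ φ₂)

/-- The reduced drift `b_δ(φ) = ⟨-∇V[q_δ(φ)] + δ G[q_δ(φ)], q_δ'(φ)⟩`. -/
def reducedDrift {n : ℕ} (V : EuclideanSpace ℝ (Fin n) → ℝ)
    (G : EuclideanSpace ℝ (Fin n) → EuclideanSpace ℝ (Fin n))
    (Qd : ℝ → EuclideanSpace ℝ (Fin n)) (δ φ : ℝ) : ℝ :=
  ⟪-(gradient V (Qd φ)) + δ • G (Qd φ), deriv Qd φ⟫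

/-- The tube `U^δ` around `M^δ`. -/
def tubeU {n : ℕ} (q : ℝ → EuclideanSpace ℝ (Fin n)) (Φ : ℝ → ℝ → EuclideanSpace ℝ (Fin n))
    (Pd : ℝ → EuclideanSpace ℝ (Fin n) → ℝ) (phiA : ℝ → ℝ) (C₀ Δ₁ Δ₂ δ : ℝ) :
    Set (EuclideanSpace ℝ (Fin n)) :=
  {Z | Metric.infDist Z (Mset q Φ δ) ≤ C₀ * Real.sqrt δ ∧
       Pd δ Z ∈ Icc (phiA δ - Δ₁) (phiA δ + Δ₂)}

/-- Costs of infinite-time paths from `A` (at `-∞`) to `B` (at time `0`). -/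
def infRateSet {n : ℕ} (V : EuclideanSpace ℝ (Fin n) → ℝ)
    (G : EuclideanSpace ℝ (Fin n) → EuclideanSpace ℝ (Fin n)) (δ : ℝ)
    (A B : EuclideanSpace ℝ (Fin n)) : Set ℝ :=
  {c | ∃ Y g : ℝ → EuclideanSpace ℝ (Fin n),
      ContinuousOn Y (Iic 0) ∧ Tendsto Y atBot (nhds A) ∧ Y 0 = B ∧
      (∀ T < (0:ℝ), IntervalIntegrable g volume T 0) ∧
      (∀ t ≤ (0:ℝ), Y 0 = Y t + ∫ s in t..(0:ℝ), g s) ∧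
      c = (1/2) * ∫ t in Iic (0:ℝ), ‖g t + gradient V (Y t) - δ • G (Y t)‖^2}

/-- `Y` is an optimal path from `A` (at `-∞`) to `B` (at time `0`): it is continuous,
absolutely continuous with derivative `g`, and its infinite-time cost realizes the
quasipotential `W_δ(A, B)`. -/
def IsOptimalPath {n : ℕ} (V : EuclideanSpace ℝ (Fin n) → ℝ)
    (G : EuclideanSpace ℝ (Fin n) → EuclideanSpace ℝ (Fin n)) (δ : ℝ)
    (A B : EuclideanSpace ℝ (Fin n)) (Y : ℝ → EuclideanSpace ℝ (Fin n)) : Prop :=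
  ContinuousOn Y (Iic 0) ∧ Tendsto Y atBot (nhds A) ∧ Y 0 = B ∧
  ∃ g : ℝ → EuclideanSpace ℝ (Fin n),
    (∀ T < (0:ℝ), IntervalIntegrable g volume T 0) ∧
    (∀ t ≤ (0:ℝ), Y 0 = Y t + ∫ s in t..(0:ℝ), g s) ∧
    (1/2) * (∫ t in Iic (0:ℝ), ‖g t + gradient V (Y t) - δ • G (Y t)‖^2) =
      quasipotential V G δ A B

set_option maxHeartbeats 1000000
set_option synthInstance.maxHeartbeats 400000

section DriftAux

variable {E : Type*} [NormedAddCommGroup E] [InnerProductSpace ℝ E]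

lemma ip_bound {a b : E} {A C : ℝ} (ha : ‖a‖ ≤ A) (hb : ‖b‖ ≤ C) : |⟪a, b⟫| ≤ A * C :=
  (abs_real_inner_le_norm a b).trans
    (mul_le_mul ha hb (norm_nonneg _) ((norm_nonneg a).trans ha))

lemma mul_bound {x y A C : ℝ} (hx : |x| ≤ A) (hy : |y| ≤ C) : |x * y| ≤ A * C := by
  rw [abs_mul]
  exact mul_le_mul hx hy (abs_nonneg _) ((abs_nonneg x).trans hx)

lemma op_bound {F : Type*} [NormedAddCommGroup F] [NormedSpace ℝ F]
    {T : E →L[ℝ] F} {x : E} {A C : ℝ} (hT : ‖T‖ ≤ A) (hx : ‖x‖ ≤ C) :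
    ‖T x‖ ≤ A * C :=
  (T.le_opNorm x).trans (mul_le_mul hT hx (norm_nonneg _) ((norm_nonneg T).trans hT))

lemma contDiff_gradient' {E : Type*} [NormedAddCommGroup E] [InnerProductSpace ℝ E]
    [CompleteSpace E]
    {V : E → ℝ} {m k : WithTop ℕ∞} (hV : ContDiff ℝ k V) (h : m + 1 ≤ k) :
    ContDiff ℝ m (gradient V) := by
  have : gradient V = fun x => (InnerProductSpace.toDual ℝ E).symm (fderiv ℝ V x) := rfl
  rw [this]
  exact (InnerProductSpace.toDual ℝ E).symm.contDiff.comp (hV.fderiv_right h)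

lemma taylor_bound {F : Type*} [NormedAddCommGroup F] [NormedSpace ℝ F]
    {f : E → F} {f' : E → E →L[ℝ] F} (hd : ∀ y, HasFDerivAt f (f' y) y)
    {x h : E} {M : ℝ} (hM : ∀ y ∈ segment ℝ x (x + h), ‖f' y - f' x‖ ≤ M) :
    ‖f (x + h) - f x - f' x h‖ ≤ M * ‖h‖ := by
  have conv : Convex ℝ (segment ℝ x (x+h)) := convex_segment _ _
  have key := conv.norm_image_sub_le_of_norm_hasFDerivWithin_le
    (f := fun y => f y - f' x y) (f' := fun y => f' y - f' x)
    (fun y _ => ((hd y).sub ((f' x).hasFDerivAt)).hasFDerivWithinAt)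
    hM (left_mem_segment ℝ x (x+h)) (right_mem_segment ℝ x (x+h))
  have e1 : (f (x+h) - f' x (x+h)) - (f x - f' x x) = f (x+h) - f x - f' x h := by
    rw [map_add]; abel
  have e2 : x + h - x = h := add_sub_cancel_left x h
  rw [e1, e2] at key
  exact key

lemma seg_norm {x p y : E} (hy : y ∈ segment ℝ x (x + p)) : ‖y - x‖ ≤ ‖p‖ := by
  have hsub : segment ℝ x (x + p) ⊆ Metric.closedBall x ‖p‖ :=
    (convex_closedBall x ‖p‖).segment_subset (Metric.mem_closedBall_self (norm_nonneg p))
      (by simp [Metric.mem_closedBall, dist_eq_norm, add_sub_cancel_left])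
  have := hsub hy
  rwa [Metric.mem_closedBall, dist_eq_norm] at this

lemma lip_on_segment {F : Type*} [NormedAddCommGroup F] [NormedSpace ℝ F]
    {f : E → F} {f' : E → E →L[ℝ] F} (hd : ∀ y, HasFDerivAt f (f' y) y)
    {x p : E} {M : ℝ} (hM : ∀ y ∈ segment ℝ x (x + p), ‖f' y‖ ≤ M) :
    ‖f (x + p) - f x‖ ≤ M * ‖p‖ := by
  have key := (convex_segment x (x+p)).norm_image_sub_le_of_norm_hasFDerivWithin_le
    (fun y _ => (hd y).hasFDerivWithinAt) hM
    (left_mem_segment ℝ x (x+p)) (right_mem_segment ℝ x (x+p))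
  rwa [add_sub_cancel_left] at key

lemma taylor_on_ball {F : Type*} [NormedAddCommGroup F] [NormedSpace ℝ F]
    {f : E → F} {f' : E → E →L[ℝ] F} (hd : ∀ y, HasFDerivAt f (f' y) y)
    {f'' : E → E →L[ℝ] E →L[ℝ] F} (hd2 : ∀ y, HasFDerivAt f' (f'' y) y)
    {x p : E} {M : ℝ} (hM : ∀ y ∈ segment ℝ x (x + p), ‖f'' y‖ ≤ M) :
    ‖f (x + p) - f x - f' x p‖ ≤ M * ‖p‖ * ‖p‖ := by
  have hM0 : 0 ≤ M := le_trans (norm_nonneg (f'' x)) (hM x (left_mem_segment ℝ x (x+p)))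
  apply taylor_bound hd
  intro y hy
  have hlip := (convex_segment x (x+p)).norm_image_sub_le_of_norm_hasFDerivWithin_le
    (fun z _ => (hd2 z).hasFDerivWithinAt) hM (left_mem_segment ℝ x (x+p)) hy
  exact hlip.trans (mul_le_mul_of_nonneg_left (seg_norm hy) hM0)

lemma periodic_deriv {F : Type*} [NormedAddCommGroup F] [NormedSpace ℝ F]
    (f : ℝ → F) {c : ℝ} (h : Function.Periodic f c) : Function.Periodic (deriv f) c := by
  intro s
  have hfun : (fun y => f (y + c)) = f := funext h
  calc deriv f (s + c) = deriv (fun y => f (y + c)) s := (deriv_comp_add_const f c s).symm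
  _ = deriv f s := by rw [hfun]

set_option maxHeartbeats 2000000 in
lemma drift_algebra
    (δ ε B : ℝ) (e1 e2 p p1 p2 gt Gt Gx : E)
    (H0 Ht DG0 DGt Dp De1 : E →L[ℝ] E)
    (hδ : 0 ≤ δ) (hε0 : 0 ≤ ε) (hε : ε ≤ 1/2) (hB : 1 ≤ B)
    (hH0 : ‖H0‖ ≤ B) (hHt : ‖Ht‖ ≤ B) (hDG0 : ‖DG0‖ ≤ B) (hDGt : ‖DGt‖ ≤ B)
    (hGx : ‖Gx‖ ≤ B) (hGt : ‖Gt‖ ≤ B) (he2 : ‖e2‖ ≤ B)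
    (hDp : ‖Dp‖ ≤ B * ε)
    (htay1 : ‖gt - H0 p‖ ≤ B * ε ^ 2)
    (htay2 : ‖Ht - H0 - Dp‖ ≤ B * ε ^ 2)
    (hGlip : ‖Gt - Gx‖ ≤ B * ε) (hDGlip : ‖DGt - DG0‖ ≤ B * ε)
    (he1 : ‖e1‖ = 1) (he1e2 : ⟪e1, e2⟫ = 0)
    (hp : ‖p‖ ≤ ε) (hp1 : ‖p1‖ ≤ ε) (hp2 : ‖p2‖ ≤ ε)
    (hsym : ∀ a b, ⟪H0 a, b⟫ = ⟪a, H0 b⟫)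
    (hH0e1 : H0 e1 = 0)
    (htrans : ⟪Dp e1, e1⟫ = ⟪p, De1 e1⟫)
    (hcurve : De1 e1 + H0 e2 = 0) :
    |δ * ⟪Gx, e1⟫ - ‖e1 + p1‖⁻¹ * ⟪-gt + δ • Gt, e1 + p1⟫| ≤ 200 * B ^ 2 * ε ^ 2 + 200 * B ^ 2 * (δ * ε) ∧
    |δ * (⟪Gx, e2⟫ + ⟪DG0 e1, e1⟫) -
        (-(⟪e1 + p1, e2 + p2⟫ / ‖e1 + p1‖) / ‖e1 + p1‖ ^ 2 * ⟪-gt + δ • Gt, e1 + p1⟫ +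
          ‖e1 + p1‖⁻¹ * (⟪-gt + δ • Gt, e2 + p2⟫ +
            ⟪-(Ht (e1 + p1)) + δ • DGt (e1 + p1), e1 + p1⟫))| ≤
      200 * B ^ 2 * ε ^ 2 + 200 * B ^ 2 * (δ * ε) := by
  have hB0 : (0:ℝ) < B := lt_of_lt_of_le one_pos hB
  set N : ℝ := ‖e1 + p1‖ with hNdef
  -- basic facts about N
  have hN1 : |N - 1| ≤ ε := by
    have h := abs_norm_sub_norm_le (e1 + p1) e1
    rw [add_sub_cancel_left, he1] at h
    exact h.trans hp1
  have hN1' := abs_le.1 hN1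
  have hNlb : 1/2 ≤ N := by linarith
  have hNub : N ≤ 2 := by linarith
  have hNpos : 0 < N := by linarith
  have hNne : N ≠ 0 := ne_of_gt hNpos
  have hes : ε ^ 2 ≤ ε := by nlinarith [mul_le_mul_of_nonneg_left hε hε0]
  have hNinv2 : N⁻¹ ≤ 2 := by
    rw [show (2:ℝ) = (1/2)⁻¹ by norm_num]
    exact inv_anti₀ (by norm_num) hNlb
  have hNinv0 : 0 ≤ N⁻¹ := inv_nonneg.2 hNpos.le
  have hNinvabs : |N⁻¹| ≤ 2 := by rw [abs_of_nonneg hNinv0]; exact hNinv2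
  have hNinv1 : |N⁻¹ - 1| ≤ 2 * ε := by
    have he : N⁻¹ - 1 = (1 - N) * N⁻¹ := by field_simp
    rw [he, abs_mul, abs_sub_comm]
    calc |N - 1| * |N⁻¹| ≤ ε * 2 :=
      mul_le_mul hN1 hNinvabs (abs_nonneg _) hε0
    _ = 2 * ε := by ring
  have hvN : ‖e1 + p1‖ ≤ 2 := hNub
  have hv' : ‖e2 + p2‖ ≤ 2 * B := by
    calc ‖e2 + p2‖ ≤ ‖e2‖ + ‖p2‖ := norm_add_le _ _
    _ ≤ B + ε := add_le_add he2 hp2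
    _ ≤ 2 * B := by linarith
  have hgt : ‖gt‖ ≤ 2 * B * ε := by
    have : gt = (gt - H0 p) + H0 p := by abel
    rw [this]
    calc ‖(gt - H0 p) + H0 p‖ ≤ ‖gt - H0 p‖ + ‖H0 p‖ := norm_add_le _ _
    _ ≤ B * ε ^ 2 + B * ε := add_le_add htay1 (op_bound hH0 hp)
    _ ≤ 2 * B * ε := by nlinarith [mul_le_mul_of_nonneg_left hes hB0.le]
  have hu : ‖N⁻¹ • (e1 + p1) - e1‖ ≤ 4 * ε := by
    have he : N⁻¹ • (e1 + p1) - e1 = N⁻¹ • p1 + (N⁻¹ - 1) • e1 := by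
      rw [smul_add, sub_smul, one_smul]; abel
    rw [he]
    calc ‖N⁻¹ • p1 + (N⁻¹ - 1) • e1‖ ≤ ‖N⁻¹ • p1‖ + ‖(N⁻¹ - 1) • e1‖ := norm_add_le _ _
    _ = |N⁻¹| * ‖p1‖ + |N⁻¹ - 1| * ‖e1‖ := by rw [norm_smul, norm_smul]; rfl
    _ ≤ 2 * ε + 2 * ε * 1 := add_le_add (mul_le_mul hNinvabs hp1 (norm_nonneg _) (by norm_num))
        (mul_le_mul hNinv1 he1.le (norm_nonneg _) (by positivity))
    _ ≤ 4 * ε := by linarith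
  -- inner product facts
  have h00 : ⟪H0 p, e1⟫ = 0 := by rw [hsym, hH0e1, inner_zero_right]
  have h01 : ⟪H0 p1, e1⟫ = 0 := by rw [hsym, hH0e1, inner_zero_right]
  have h02 : ∀ z : E, ⟪H0 e1, z⟫ = 0 := fun z => by rw [hH0e1, inner_zero_left]
  have hvv' : |⟪e1 + p1, e2 + p2⟫| ≤ 3 * B * ε := by
    have he : ⟪e1 + p1, e2 + p2⟫ = ⟪e1, p2⟫ + ⟪p1, e2⟫ + ⟪p1, p2⟫ := by
      simp [inner_add_left, inner_add_right, he1e2]; ring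
    rw [he]
    have b1 : |⟪e1, p2⟫| ≤ 1 * ε := ip_bound he1.le hp2
    have b2 : |⟪p1, e2⟫| ≤ ε * B := ip_bound hp1 he2
    have b3 : |⟪p1, p2⟫| ≤ ε * ε := ip_bound hp1 hp2
    have := (abs_add_le (⟪e1, p2⟫ + ⟪p1, e2⟫) ⟪p1, p2⟫).trans
      (add_le_add ((abs_add_le _ _).trans (add_le_add b1 b2)) b3)
    nlinarith
  have hBB : B ≤ B ^ 2 := by nlinarith
  have habs4 : ∀ a b c d : ℝ, |a + b - c - d| ≤ |a| + |b| + |c| + |d| := by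
    intro a b c d
    rw [abs_le]
    constructor
    · linarith [neg_abs_le a, neg_abs_le b, le_abs_self c, le_abs_self d]
    · linarith [le_abs_self a, le_abs_self b, neg_abs_le c, neg_abs_le d]
  have hδabs : |δ| ≤ δ := le_of_eq (abs_of_nonneg hδ)
  constructor
  · -- zeroth order estimate
    have expandGt : ⟪Gt, N⁻¹ • (e1 + p1) - e1⟫ = N⁻¹ * ⟪Gt, e1 + p1⟫ - ⟪Gt, e1⟫ := by
      rw [inner_sub_right, real_inner_smul_right]
    have eq : δ * ⟪Gx, e1⟫ - N⁻¹ * ⟪-gt + δ • Gt, e1 + p1⟫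
        = N⁻¹ * ⟪gt - H0 p, e1 + p1⟫ + N⁻¹ * ⟪H0 p, p1⟫
          - δ * ⟪Gt - Gx, e1⟫ - δ * ⟪Gt, N⁻¹ • (e1 + p1) - e1⟫ := by
      rw [expandGt]
      simp only [inner_add_left, inner_sub_left, inner_add_right, inner_neg_left,
        real_inner_smul_left, h00]
      ring
    rw [eq]
    have b1 : |N⁻¹ * ⟪gt - H0 p, e1 + p1⟫| ≤ 2 * (B * ε ^ 2 * 2) :=
      mul_bound hNinvabs (ip_bound htay1 hvN)
    have b2 : |N⁻¹ * ⟪H0 p, p1⟫| ≤ 2 * (B * ε * ε) :=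
      mul_bound hNinvabs (ip_bound (op_bound hH0 hp) hp1)
    have b3 : |δ * ⟪Gt - Gx, e1⟫| ≤ δ * (B * ε * 1) :=
      mul_bound hδabs (ip_bound hGlip he1.le)
    have b4 : |δ * ⟪Gt, N⁻¹ • (e1 + p1) - e1⟫| ≤ δ * (B * (4 * ε)) :=
      mul_bound hδabs (ip_bound hGt hu)
    have tri := (habs4 _ _ _ _).trans (add_le_add (add_le_add (add_le_add b1 b2) b3) b4)
    refine tri.trans ?_
    have k1 : B * ε ^ 2 ≤ B ^ 2 * ε ^ 2 := mul_le_mul_of_nonneg_right hBB (sq_nonneg ε)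
    have k2 : B * (δ * ε) ≤ B ^ 2 * (δ * ε) :=
      mul_le_mul_of_nonneg_right hBB (by positivity)
    have k3 : (0:ℝ) ≤ B ^ 2 * ε ^ 2 := by positivity
    have k4 : (0:ℝ) ≤ B ^ 2 * (δ * ε) := by positivity
    linarith [k1, k2, k3, k4]
  · -- first order estimate
    have habs8 : ∀ t a b c d e f g : ℝ,
        |t + (-a - b - c) + (-d - e - f - g)| ≤ |t| + |a| + |b| + |c| + |d| + |e| + |f| + |g| := by
      intro t a b c d e f g
      rw [abs_le]
      constructor
      · linarith [neg_abs_le t, le_abs_self a, le_abs_self b, le_abs_self c, le_abs_self d,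
          le_abs_self e, le_abs_self f, le_abs_self g]
      · linarith [le_abs_self t, neg_abs_le a, neg_abs_le b, neg_abs_le c, neg_abs_le d,
          neg_abs_le e, neg_abs_le f, neg_abs_le g]
    have habs6 : ∀ a b c d e f : ℝ,
        |a + b + c + d + e + f| ≤ |a| + |b| + |c| + |d| + |e| + |f| := by
      intro a b c d e f
      rw [abs_le]
      constructor
      · linarith [neg_abs_le a, neg_abs_le b, neg_abs_le c, neg_abs_le d, neg_abs_le e,
          neg_abs_le f]
      · linarith [le_abs_self a, le_abs_self b, le_abs_self c, le_abs_self d, le_abs_self e,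
          le_abs_self f]
    have hDe1 : De1 e1 = -(H0 e2) := eq_neg_of_add_eq_zero_left hcurve
    have hDpe1e1 : ⟪Dp e1, e1⟫ = -⟪H0 p, e2⟫ := by
      rw [htrans, hDe1, inner_neg_right, hsym]
    have habsN2 : |(N⁻¹) ^ 2| ≤ 4 := by
      rw [abs_pow]
      calc |N⁻¹| ^ 2 ≤ 2 ^ 2 := pow_le_pow_left₀ (abs_nonneg _) hNinvabs 2
      _ = 4 := by norm_num
    have hdiv : ∀ x : ℝ, x / N / N ^ 2 = x * N⁻¹ * (N⁻¹) ^ 2 := by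
      intro x
      rw [div_eq_mul_inv, div_eq_mul_inv, inv_pow]
    have kk1 : B * ε ^ 2 ≤ B ^ 2 * ε ^ 2 := mul_le_mul_of_nonneg_right hBB (sq_nonneg ε)
    have kk2 : B * ε ≤ B ^ 2 * ε := mul_le_mul_of_nonneg_right hBB hε0
    -- split into gradient part P and G part Q
    have eqPQ : -(⟪e1 + p1, e2 + p2⟫ / N) / N ^ 2 * ⟪-gt + δ • Gt, e1 + p1⟫ +
          N⁻¹ * (⟪-gt + δ • Gt, e2 + p2⟫ + ⟪-(Ht (e1 + p1)) + δ • DGt (e1 + p1), e1 + p1⟫)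
        = (⟪e1 + p1, e2 + p2⟫ / N / N ^ 2 * ⟪gt, e1 + p1⟫
            - N⁻¹ * (⟪gt, e2 + p2⟫ + ⟪Ht (e1 + p1), e1 + p1⟫))
          + δ * (-(⟪e1 + p1, e2 + p2⟫ / N) / N ^ 2 * ⟪Gt, e1 + p1⟫
            + N⁻¹ * (⟪Gt, e2 + p2⟫ + ⟪DGt (e1 + p1), e1 + p1⟫)) := by
      simp only [inner_add_left, inner_neg_left, real_inner_smul_left]
      ring
    -- bound for the gradient part
    have bPA : |⟪e1 + p1, e2 + p2⟫ / N / N ^ 2 * ⟪gt, e1 + p1⟫|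
        ≤ 3 * B * ε * 2 * 4 * (2 * B * ε * 2) := by
      rw [hdiv]
      exact mul_bound (mul_bound (mul_bound hvv' hNinvabs) habsN2) (ip_bound hgt hvN)
    have sum_eq : ⟪gt, e2 + p2⟫ + ⟪Ht (e1 + p1), e1 + p1⟫
        = ⟪H0 p, p2⟫ + ⟪gt - H0 p, e2 + p2⟫ + ⟪(Ht - H0 - Dp) (e1 + p1), e1 + p1⟫
          + ⟪H0 p1, p1⟫ + ⟪Dp e1, p1⟫ + ⟪Dp p1, e1 + p1⟫ := by
      simp only [ContinuousLinearMap.sub_apply, map_add, inner_add_left, inner_add_right,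
        inner_sub_left, hH0e1, inner_zero_left, hDpe1e1, h01]
      ring
    have bs : |⟪gt, e2 + p2⟫ + ⟪Ht (e1 + p1), e1 + p1⟫| ≤ 2 * B ^ 2 * ε ^ 2 + 9 * B * ε ^ 2 := by
      rw [sum_eq]
      have s1 : |⟪H0 p, p2⟫| ≤ B * ε * ε := ip_bound (op_bound hH0 hp) hp2
      have s2 : |⟪gt - H0 p, e2 + p2⟫| ≤ B * ε ^ 2 * (2 * B) := ip_bound htay1 hv'
      have s3 : |⟪(Ht - H0 - Dp) (e1 + p1), e1 + p1⟫| ≤ B * ε ^ 2 * 2 * 2 :=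
        ip_bound (op_bound htay2 hvN) hvN
      have s4 : |⟪H0 p1, p1⟫| ≤ B * ε * ε := ip_bound (op_bound hH0 hp1) hp1
      have s5 : |⟪Dp e1, p1⟫| ≤ B * ε * 1 * ε := ip_bound (op_bound hDp he1.le) hp1
      have s6 : |⟪Dp p1, e1 + p1⟫| ≤ B * ε * ε * 2 := ip_bound (op_bound hDp hp1) hvN
      have tri := habs6 ⟪H0 p, p2⟫ (⟪gt - H0 p, e2 + p2⟫)
        (⟪(Ht - H0 - Dp) (e1 + p1), e1 + p1⟫) ⟪H0 p1, p1⟫ ⟪Dp e1, p1⟫ (⟪Dp p1, e1 + p1⟫)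
      have := tri.trans (by linarith [s1, s2, s3, s4, s5, s6] :
        |⟪H0 p, p2⟫| + |⟪gt - H0 p, e2 + p2⟫| + |⟪(Ht - H0 - Dp) (e1 + p1), e1 + p1⟫|
          + |⟪H0 p1, p1⟫| + |⟪Dp e1, p1⟫| + |⟪Dp p1, e1 + p1⟫|
          ≤ 2 * B ^ 2 * ε ^ 2 + 9 * B * ε ^ 2)
      exact this
    have bP : |⟪e1 + p1, e2 + p2⟫ / N / N ^ 2 * ⟪gt, e1 + p1⟫
          - N⁻¹ * (⟪gt, e2 + p2⟫ + ⟪Ht (e1 + p1), e1 + p1⟫)| ≤ 150 * B ^ 2 * ε ^ 2 := by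
      have b2 : |N⁻¹ * (⟪gt, e2 + p2⟫ + ⟪Ht (e1 + p1), e1 + p1⟫)|
          ≤ 2 * (2 * B ^ 2 * ε ^ 2 + 9 * B * ε ^ 2) := mul_bound hNinvabs bs
      have tri : |⟪e1 + p1, e2 + p2⟫ / N / N ^ 2 * ⟪gt, e1 + p1⟫
            - N⁻¹ * (⟪gt, e2 + p2⟫ + ⟪Ht (e1 + p1), e1 + p1⟫)|
          ≤ |⟪e1 + p1, e2 + p2⟫ / N / N ^ 2 * ⟪gt, e1 + p1⟫|
            + |N⁻¹ * (⟪gt, e2 + p2⟫ + ⟪Ht (e1 + p1), e1 + p1⟫)| := by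
        rw [abs_le]
        constructor
        · linarith [neg_abs_le (⟪e1 + p1, e2 + p2⟫ / N / N ^ 2 * ⟪gt, e1 + p1⟫),
            le_abs_self (N⁻¹ * (⟪gt, e2 + p2⟫ + ⟪Ht (e1 + p1), e1 + p1⟫))]
        · linarith [le_abs_self (⟪e1 + p1, e2 + p2⟫ / N / N ^ 2 * ⟪gt, e1 + p1⟫),
            neg_abs_le (N⁻¹ * (⟪gt, e2 + p2⟫ + ⟪Ht (e1 + p1), e1 + p1⟫))]
      have := tri.trans (add_le_add bPA b2)
      refine this.trans ?_
      have k3 : (0:ℝ) ≤ B ^ 2 * ε ^ 2 := by positivity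
      linarith [kk1, k3]
    -- bound for the G part
    have eqQ : ⟪Gx, e2⟫ + ⟪DG0 e1, e1⟫
          - (-(⟪e1 + p1, e2 + p2⟫ / N) / N ^ 2 * ⟪Gt, e1 + p1⟫
            + N⁻¹ * (⟪Gt, e2 + p2⟫ + ⟪DGt (e1 + p1), e1 + p1⟫))
        = ⟪e1 + p1, e2 + p2⟫ / N / N ^ 2 * ⟪Gt, e1 + p1⟫
          + (-((N⁻¹ - 1) * ⟪Gt, e2 + p2⟫) - ⟪Gt - Gx, e2 + p2⟫ - ⟪Gx, p2⟫)
          + (-((N⁻¹ - 1) * ⟪DGt (e1 + p1), e1 + p1⟫) - ⟪(DGt - DG0) (e1 + p1), e1 + p1⟫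
            - ⟪DG0 e1, p1⟫ - ⟪DG0 p1, e1 + p1⟫) := by
      simp only [ContinuousLinearMap.sub_apply, map_add, inner_add_left, inner_add_right,
        inner_sub_left]
      ring
    have bQ : |⟪Gx, e2⟫ + ⟪DG0 e1, e1⟫
          - (-(⟪e1 + p1, e2 + p2⟫ / N) / N ^ 2 * ⟪Gt, e1 + p1⟫
            + N⁻¹ * (⟪Gt, e2 + p2⟫ + ⟪DGt (e1 + p1), e1 + p1⟫))| ≤ 70 * B ^ 2 * ε := by
      rw [eqQ]
      have t1b : |⟪e1 + p1, e2 + p2⟫ / N / N ^ 2 * ⟪Gt, e1 + p1⟫|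
          ≤ 3 * B * ε * 2 * 4 * (B * 2) := by
        rw [hdiv]
        exact mul_bound (mul_bound (mul_bound hvv' hNinvabs) habsN2) (ip_bound hGt hvN)
      have a2 : |(N⁻¹ - 1) * ⟪Gt, e2 + p2⟫| ≤ 2 * ε * (B * (2 * B)) :=
        mul_bound hNinv1 (ip_bound hGt hv')
      have b2 : |⟪Gt - Gx, e2 + p2⟫| ≤ B * ε * (2 * B) := ip_bound hGlip hv'
      have c2 : |⟪Gx, p2⟫| ≤ B * ε := ip_bound hGx hp2
      have a3 : |(N⁻¹ - 1) * ⟪DGt (e1 + p1), e1 + p1⟫| ≤ 2 * ε * (B * 2 * 2) :=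
        mul_bound hNinv1 (ip_bound (op_bound hDGt hvN) hvN)
      have b3 : |⟪(DGt - DG0) (e1 + p1), e1 + p1⟫| ≤ B * ε * 2 * 2 :=
        ip_bound (op_bound hDGlip hvN) hvN
      have c3 : |⟪DG0 e1, p1⟫| ≤ B * 1 * ε := ip_bound (op_bound hDG0 he1.le) hp1
      have d3 : |⟪DG0 p1, e1 + p1⟫| ≤ B * ε * 2 := ip_bound (op_bound hDG0 hp1) hvN
      have tri := habs8 (⟪e1 + p1, e2 + p2⟫ / N / N ^ 2 * ⟪Gt, e1 + p1⟫)
        ((N⁻¹ - 1) * ⟪Gt, e2 + p2⟫) (⟪Gt - Gx, e2 + p2⟫) ⟪Gx, p2⟫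
        ((N⁻¹ - 1) * ⟪DGt (e1 + p1), e1 + p1⟫) (⟪(DGt - DG0) (e1 + p1), e1 + p1⟫)
        ⟪DG0 e1, p1⟫ (⟪DG0 p1, e1 + p1⟫)
      refine tri.trans ?_
      have k6 : (0:ℝ) ≤ B ^ 2 * ε := by positivity
      linarith [t1b, a2, b2, c2, a3, b3, c3, d3, kk2, k6]
    -- assemble
    have eqfin : δ * (⟪Gx, e2⟫ + ⟪DG0 e1, e1⟫) -
          (-(⟪e1 + p1, e2 + p2⟫ / N) / N ^ 2 * ⟪-gt + δ • Gt, e1 + p1⟫ +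
            N⁻¹ * (⟪-gt + δ • Gt, e2 + p2⟫ + ⟪-(Ht (e1 + p1)) + δ • DGt (e1 + p1), e1 + p1⟫))
        = -(⟪e1 + p1, e2 + p2⟫ / N / N ^ 2 * ⟪gt, e1 + p1⟫
            - N⁻¹ * (⟪gt, e2 + p2⟫ + ⟪Ht (e1 + p1), e1 + p1⟫))
          + δ * (⟪Gx, e2⟫ + ⟪DG0 e1, e1⟫
            - (-(⟪e1 + p1, e2 + p2⟫ / N) / N ^ 2 * ⟪Gt, e1 + p1⟫
              + N⁻¹ * (⟪Gt, e2 + p2⟫ + ⟪DGt (e1 + p1), e1 + p1⟫))) := by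
      rw [eqPQ]
      ring
    rw [eqfin]
    have trif : |-(⟪e1 + p1, e2 + p2⟫ / N / N ^ 2 * ⟪gt, e1 + p1⟫
            - N⁻¹ * (⟪gt, e2 + p2⟫ + ⟪Ht (e1 + p1), e1 + p1⟫))
          + δ * (⟪Gx, e2⟫ + ⟪DG0 e1, e1⟫
            - (-(⟪e1 + p1, e2 + p2⟫ / N) / N ^ 2 * ⟪Gt, e1 + p1⟫
              + N⁻¹ * (⟪Gt, e2 + p2⟫ + ⟪DGt (e1 + p1), e1 + p1⟫)))|
        ≤ 150 * B ^ 2 * ε ^ 2 + δ * (70 * B ^ 2 * ε) := by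
      have h1 := bP
      have h2 : |δ * (⟪Gx, e2⟫ + ⟪DG0 e1, e1⟫
            - (-(⟪e1 + p1, e2 + p2⟫ / N) / N ^ 2 * ⟪Gt, e1 + p1⟫
              + N⁻¹ * (⟪Gt, e2 + p2⟫ + ⟪DGt (e1 + p1), e1 + p1⟫)))| ≤ δ * (70 * B ^ 2 * ε) :=
        mul_bound hδabs bQ
      rw [abs_le]
      constructor
      · linarith [abs_le.1 h1, abs_le.1 h2, le_abs_self (⟪e1 + p1, e2 + p2⟫ / N / N ^ 2 * ⟪gt, e1 + p1⟫
            - N⁻¹ * (⟪gt, e2 + p2⟫ + ⟪Ht (e1 + p1), e1 + p1⟫)), neg_abs_le (δ * (⟪Gx, e2⟫ + ⟪DG0 e1, e1⟫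
            - (-(⟪e1 + p1, e2 + p2⟫ / N) / N ^ 2 * ⟪Gt, e1 + p1⟫
              + N⁻¹ * (⟪Gt, e2 + p2⟫ + ⟪DGt (e1 + p1), e1 + p1⟫))))]
      · linarith [abs_le.1 h1, abs_le.1 h2, neg_abs_le (⟪e1 + p1, e2 + p2⟫ / N / N ^ 2 * ⟪gt, e1 + p1⟫
            - N⁻¹ * (⟪gt, e2 + p2⟫ + ⟪Ht (e1 + p1), e1 + p1⟫)), le_abs_self (δ * (⟪Gx, e2⟫ + ⟪DG0 e1, e1⟫
            - (-(⟪e1 + p1, e2 + p2⟫ / N) / N ^ 2 * ⟪Gt, e1 + p1⟫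
              + N⁻¹ * (⟪Gt, e2 + p2⟫ + ⟪DGt (e1 + p1), e1 + p1⟫))))]
    refine trif.trans ?_
    have k3 : (0:ℝ) ≤ B ^ 2 * ε ^ 2 := by positivity
    have k4 : (0:ℝ) ≤ B ^ 2 * (δ * ε) := by positivity
    have k5 : δ * (70 * B ^ 2 * ε) = 70 * (B ^ 2 * (δ * ε)) := by ring
    linarith [k3, k4]



end DriftAux

section HessAux

variable {n : ℕ} {V : EuclideanSpace ℝ (Fin n) → ℝ}

lemma grad_hasFDerivAt (hV : ContDiff ℝ 4 V) (x : EuclideanSpace ℝ (Fin n)) :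
    HasFDerivAt (gradient V) (hessLM V x) x := by
  have h3 : ContDiff ℝ 3 (gradient V) := contDiff_gradient' hV (by norm_num)
  exact (h3.differentiable (by norm_num) x).hasFDerivAt

lemma hess_contDiff (hV : ContDiff ℝ 4 V) : ContDiff ℝ 2 (hessLM V) := by
  have h3 : ContDiff ℝ 3 (gradient V) := contDiff_gradient' hV (by norm_num)
  exact h3.fderiv_right (by norm_num)

lemma hess_hasFDerivAt (hV : ContDiff ℝ 4 V) (x : EuclideanSpace ℝ (Fin n)) :
    HasFDerivAt (hessLM V) (fderiv ℝ (hessLM V) x) x :=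
  ((hess_contDiff hV).differentiable (by norm_num) x).hasFDerivAt

-- S1 : Hessian symmetric
lemma hess_symm (hV : ContDiff ℝ 4 V) (x : EuclideanSpace ℝ (Fin n))
    (a b : EuclideanSpace ℝ (Fin n)) : ⟪hessLM V x a, b⟫ = ⟪a, hessLM V x b⟫ := by
  set T : EuclideanSpace ℝ (Fin n) →L[ℝ] (EuclideanSpace ℝ (Fin n) →L[ℝ] ℝ) :=
    (InnerProductSpace.toDual ℝ (EuclideanSpace ℝ (Fin n))).toContinuousLinearEquiv.toContinuousLinearMap with hT
  have hf : ∀ y, HasFDerivAt V (T (gradient V y)) y := by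
    intro y
    have : T (gradient V y) = fderiv ℝ V y := by
      simp [hT, gradient]
    rw [this]
    exact ((hV.differentiable (by norm_num)) y).hasFDerivAt
  have hx : HasFDerivAt (fun y => T (gradient V y)) (T.comp (hessLM V x)) x :=
    T.hasFDerivAt.comp x (grad_hasFDerivAt hV x)
  have := second_derivative_symmetric hf hx a b
  have h1 : ∀ u v, (T.comp (hessLM V x)) u v = ⟪hessLM V x u, v⟫ := by
    intro u v
    rw [ContinuousLinearMap.comp_apply, hT]
    exact InnerProductSpace.toDual_apply_apply
  rw [h1, h1] at this
  rw [this, real_inner_comm]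

-- S2 : symmetry of the derivative of the Hessian in the two differentiation directions
lemma hessD_symm (hV : ContDiff ℝ 4 V) (x : EuclideanSpace ℝ (Fin n))
    (a b : EuclideanSpace ℝ (Fin n)) :
    fderiv ℝ (hessLM V) x a b = fderiv ℝ (hessLM V) x b a :=
  second_derivative_symmetric (fun y => grad_hasFDerivAt hV y) (hess_hasFDerivAt hV x) a b

lemma hessD_inner_symm (hV : ContDiff ℝ 4 V) (x a b c : EuclideanSpace ℝ (Fin n)) :
    ⟪fderiv ℝ (hessLM V) x a b, c⟫ = ⟪b, fderiv ℝ (hessLM V) x a c⟫ := by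
  set D := fderiv ℝ (hessLM V) x with hD
  have hfb : HasFDerivAt (fun y => hessLM V y b) (D.flip b) x := by
    have := (hess_hasFDerivAt hV x).clm_apply (hasFDerivAt_const b x)
    simpa using this
  have hfc : HasFDerivAt (fun y => hessLM V y c) (D.flip c) x := by
    have := (hess_hasFDerivAt hV x).clm_apply (hasFDerivAt_const c x)
    simpa using this
  have hF : (fun y => ⟪hessLM V y b, c⟫) = (fun y => ⟪b, hessLM V y c⟫) :=
    funext fun y => hess_symm hV y b c
  have d1 : fderiv ℝ (fun y => ⟪hessLM V y b, c⟫) x a = ⟪D a b, c⟫ := by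
    rw [fderiv_inner_apply ℝ hfb.differentiableAt (differentiableAt_const c)]
    rw [hfb.fderiv, fderiv_fun_const]
    simp
  have d2 : fderiv ℝ (fun y => ⟪b, hessLM V y c⟫) x a = ⟪b, D a c⟫ := by
    rw [fderiv_inner_apply ℝ (differentiableAt_const b) hfc.differentiableAt]
    rw [hfc.fderiv, fderiv_fun_const]
    simp
  rw [← d1, ← d2, hF]

lemma hessD_transfer (hV : ContDiff ℝ 4 V) (x a b : EuclideanSpace ℝ (Fin n)) :
    ⟪fderiv ℝ (hessLM V) x a b, b⟫ = ⟪a, fderiv ℝ (hessLM V) x b b⟫ := by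
  rw [hessD_symm hV x a b, hessD_inner_symm hV x b a b]

lemma curve_identity (hV : ContDiff ℝ 4 V) {q : ℝ → EuclideanSpace ℝ (Fin n)}
    (hq : ContDiff ℝ 3 q)
    (hHtan : ∀ θ, hessLM V (q θ) (deriv q θ) = 0) (θ : ℝ) :
    fderiv ℝ (hessLM V) (q θ) (deriv q θ) (deriv q θ)
      + hessLM V (q θ) (deriv (deriv q) θ) = 0 := by
  have hq1 : HasDerivAt q (deriv q θ) θ :=
    ((hq.differentiable (by norm_num)) θ).hasDerivAt
  have hq23 : ContDiff ℝ (2+1 : WithTop ℕ∞) q := by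
    have : ((3:WithTop ℕ∞)) = 2+1 := by norm_num
    rwa [this] at hq
  have hdq : ContDiff ℝ 2 (deriv q) := (contDiff_succ_iff_deriv.1 hq23).2.2
  have hq2 : HasDerivAt (deriv q) (deriv (deriv q) θ) θ :=
    ((hdq.differentiable (by norm_num)) θ).hasDerivAt
  have hc : HasDerivAt (fun t => hessLM V (q t))
      (fderiv ℝ (hessLM V) (q θ) (deriv q θ)) θ :=
    (hess_hasFDerivAt hV (q θ)).comp_hasDerivAt θ hq1
  have hg : HasDerivAt (fun t => hessLM V (q t) (deriv q t))
      (fderiv ℝ (hessLM V) (q θ) (deriv q θ) (deriv q θ)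
        + hessLM V (q θ) (deriv (deriv q) θ)) θ := hc.clm_apply hq2
  have hzero : (fun t => hessLM V (q t) (deriv q t)) = fun _ => (0 : EuclideanSpace ℝ (Fin n)) :=
    funext fun t => hHtan t
  rw [hzero] at hg
  exact hg.unique (hasDerivAt_const θ 0)


end HessAux

lemma cont_bound_aux {E F : Type*} [NormedAddCommGroup E] [NormedSpace ℝ E]
    [NormedAddCommGroup F] [NormedSpace ℝ F] {f : E → F} (hf : ContDiff ℝ 1 f) {K : Set E}
    (hK : IsCompact K) : ∃ M, ∀ x ∈ K, ‖fderiv ℝ f x‖ ≤ M :=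
  hK.exists_bound_of_continuousOn (hf.fderiv_right (m := 0) (by norm_num)).continuous.continuousOn

lemma coeff_lemma (B CΦ δ : ℝ) (hB : 1 ≤ B) (hC : 0 < CΦ) :
    200*B^2*(CΦ*δ)^2 + 200*B^2*(δ*(CΦ*δ)) ≤ (200*(B^2+B+1)*(CΦ^2+CΦ+1)+1)*δ^2 := by
  have hB0 : (0:ℝ) ≤ B := by linarith
  have h1 : 200*B^2*CΦ^2 + 200*B^2*CΦ ≤ 200*(B^2+B+1)*(CΦ^2+CΦ+1)+1 := by
    nlinarith [sq_nonneg B, sq_nonneg CΦ, hC.le, mul_nonneg hB0 (sq_nonneg CΦ),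
      mul_nonneg hB0 hC.le]
  calc 200*B^2*(CΦ*δ)^2 + 200*B^2*(δ*(CΦ*δ)) = (200*B^2*CΦ^2 + 200*B^2*CΦ)*δ^2 := by ring
  _ ≤ _ := mul_le_mul_of_nonneg_right h1 (sq_nonneg δ)


/-- Lemma 2.7: the restricted drift `b̃_δ` is a `O(δ²)`-perturbation of `b` in `C¹`. -/
theorem drift_comparison {n : ℕ}
    (V : EuclideanSpace ℝ (Fin n) → ℝ) (G : EuclideanSpace ℝ (Fin n) → EuclideanSpace ℝ (Fin n))
    (q : ℝ → EuclideanSpace ℝ (Fin n)) (L lam : ℝ)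
    (hV : ContDiff ℝ 4 V) (hG : ContDiff ℝ 2 G)
    (hL : 0 < L) (hq : ContDiff ℝ 3 q) (hqper : Function.Periodic q L)
    (hqunit : ∀ θ, ‖deriv q θ‖ = 1)
    (hqinj : ∀ θ₁ θ₂ : ℝ, q θ₁ = q θ₂ → ∃ k : ℤ, θ₂ - θ₁ = k * L)
    (hgrad : ∀ θ, gradient V (q θ) = 0) (hV0 : ∀ θ, V (q θ) = 0)
    (hHtan : ∀ θ, hessLM V (q θ) (deriv q θ) = 0)
    (hlam : 0 < lam)
    (hspec : ∀ θ : ℝ, ∀ w : EuclideanSpace ℝ (Fin n), ⟪w, deriv q θ⟫ = 0 →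
      lam * ‖w‖ ^ 2 ≤ ⟪hessLM V (q θ) w, w⟫)
    (Φ : ℝ → ℝ → EuclideanSpace ℝ (Fin n)) (δ₁ CΦ : ℝ) (hδ₁ : 0 < δ₁) (hCΦ : 0 < CΦ)
    (hΦ : ∀ δ ∈ Ioc (0:ℝ) δ₁, ContDiff ℝ 2 (Φ δ) ∧ Function.Periodic (Φ δ) L ∧
      (∀ θ, ⟪Φ δ θ, deriv q θ⟫ = 0) ∧
      (∀ θ, ‖Φ δ θ‖ ≤ CΦ * δ ∧ ‖deriv (Φ δ) θ‖ ≤ CΦ * δ ∧ ‖deriv (deriv (Φ δ)) θ‖ ≤ CΦ * δ) ∧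
      flowInvariant V G δ (Mset q Φ δ))
    :
    ∃ δ₀ > (0:ℝ), ∃ C > (0:ℝ), ∀ δ : ℝ, 0 < δ → δ ≤ δ₀ → ∀ θ : ℝ,
      |δ * ⟪G (q θ), deriv q θ⟫ -
          ⟪-(gradient V (q θ + Φ δ θ)) + δ • G (q θ + Φ δ θ),
            ‖deriv (fun s => q s + Φ δ s) θ‖⁻¹ • deriv (fun s => q s + Φ δ s) θ⟫| ≤
        C * δ ^ 2 ∧
      |deriv (fun ϑ => δ * ⟪G (q ϑ), deriv q ϑ⟫) θ -
          deriv (fun ϑ => ⟪-(gradient V (q ϑ + Φ δ ϑ)) + δ • G (q ϑ + Φ δ ϑ),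
            ‖deriv (fun s => q s + Φ δ s) ϑ‖⁻¹ • deriv (fun s => q s + Φ δ s) ϑ⟫) θ| ≤
        C * δ ^ 2 := by
  have hgrad3 : ContDiff ℝ 3 (gradient V) := contDiff_gradient' hV (by norm_num)
  have hgradDiff : Differentiable ℝ (gradient V) := hgrad3.differentiable (by norm_num)
  have hhess2 : ContDiff ℝ 2 (hessLM V) := hess_contDiff hV
  have hDhess1 : ContDiff ℝ 1 (fderiv ℝ (hessLM V)) := hhess2.fderiv_right (by norm_num)
  have hDhessDiff : Differentiable ℝ (fderiv ℝ (hessLM V)) :=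
    hDhess1.differentiable (by norm_num)
  have hGdiff : Differentiable ℝ G := hG.differentiable (by norm_num)
  have hDG1 : ContDiff ℝ 1 (fderiv ℝ G) := hG.fderiv_right (by norm_num)
  have hDGdiff : Differentiable ℝ (fderiv ℝ G) := hDG1.differentiable (by norm_num)
  have hDDGCont : Continuous (fderiv ℝ (fderiv ℝ G)) :=
    (hDG1.fderiv_right (m := 0) (by norm_num)).continuous
  have hq23 : ContDiff ℝ (2+1 : WithTop ℕ∞) q := by
    have h3 : ((3:WithTop ℕ∞)) = 2+1 := by norm_num
    rwa [h3] at hq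
  have hdq : ContDiff ℝ 2 (deriv q) := (contDiff_succ_iff_deriv.1 hq23).2.2
  have hdq11 : ContDiff ℝ (1+1 : WithTop ℕ∞) (deriv q) := by
    have h2 : ((2:WithTop ℕ∞)) = 1+1 := by norm_num
    rwa [h2] at hdq
  have hddq : ContDiff ℝ 1 (deriv (deriv q)) := (contDiff_succ_iff_deriv.1 hdq11).2.2
  have hqd : Differentiable ℝ q := hq.differentiable (by norm_num)
  have hdqd : Differentiable ℝ (deriv q) := hdq.differentiable (by norm_num)
  -- compact neighbourhood of the curve
  have hScomp : IsCompact (q '' (Icc 0 L)) := isCompact_Icc.image hq.continuous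
  have hKcomp : IsCompact (Metric.cthickening 1 (q '' (Icc 0 L))) := hScomp.cthickening
  have hqS : ∀ θ : ℝ, q θ ∈ q '' (Icc 0 L) := by
    intro θ
    obtain ⟨y, hy, hyeq⟩ := hqper.exists_mem_Ico₀ hL θ
    exact ⟨y, ⟨hy.1, hy.2.le⟩, hyeq.symm⟩
  have hxK : ∀ θ : ℝ, q θ ∈ Metric.cthickening 1 (q '' (Icc 0 L)) :=
    fun θ => Metric.self_subset_cthickening _ (hqS θ)
  -- bounds on the compact set
  obtain ⟨M1, hM1⟩ := hKcomp.exists_bound_of_continuousOn hhess2.continuous.continuousOn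
  obtain ⟨M2, hM2⟩ := hKcomp.exists_bound_of_continuousOn
    (E := EuclideanSpace ℝ (Fin n) →L[ℝ] EuclideanSpace ℝ (Fin n) →L[ℝ] EuclideanSpace ℝ (Fin n))
    hDhess1.continuous.continuousOn
  obtain ⟨M3, hM3⟩ := cont_bound_aux hDhess1 hKcomp
  obtain ⟨M4, hM4⟩ := hKcomp.exists_bound_of_continuousOn hG.continuous.continuousOn
  obtain ⟨M5, hM5⟩ := hKcomp.exists_bound_of_continuousOn hDG1.continuous.continuousOn
  obtain ⟨M6, hM6⟩ := hKcomp.exists_bound_of_continuousOn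
    (E := EuclideanSpace ℝ (Fin n) →L[ℝ] EuclideanSpace ℝ (Fin n) →L[ℝ] EuclideanSpace ℝ (Fin n))
    hDDGCont.continuousOn
  have hper2 : Function.Periodic (deriv (deriv q)) L :=
    periodic_deriv _ (periodic_deriv _ hqper)
  obtain ⟨M7, hM7⟩ := (isCompact_Icc (a := (0:ℝ)) (b := L)).exists_bound_of_continuousOn
    hddq.continuous.continuousOn
  have hMq : ∀ θ : ℝ, ‖deriv (deriv q) θ‖ ≤ M7 := by
    intro θ
    obtain ⟨y, hy, hyeq⟩ := hper2.exists_mem_Ico₀ hL θ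
    rw [hyeq]
    exact hM7 y ⟨hy.1, hy.2.le⟩
  set B : ℝ := |M1| + |M2| + |M3| + |M4| + |M5| + |M6| + |M7| + 1 with hBdef
  have habs1 := abs_nonneg M1
  have habs2 := abs_nonneg M2
  have habs3 := abs_nonneg M3
  have habs4 := abs_nonneg M4
  have habs5 := abs_nonneg M5
  have habs6 := abs_nonneg M6
  have habs7 := abs_nonneg M7
  have hB1 : 1 ≤ B := by simp only [hBdef]; linarith
  have hB0 : (0:ℝ) ≤ B := by linarith
  have hM1B : M1 ≤ B := le_trans (le_abs_self M1) (by simp only [hBdef]; linarith)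
  have hM2B : M2 ≤ B := le_trans (le_abs_self M2) (by simp only [hBdef]; linarith)
  have hM3B : M3 ≤ B := le_trans (le_abs_self M3) (by simp only [hBdef]; linarith)
  have hM4B : M4 ≤ B := le_trans (le_abs_self M4) (by simp only [hBdef]; linarith)
  have hM5B : M5 ≤ B := le_trans (le_abs_self M5) (by simp only [hBdef]; linarith)
  have hM6B : M6 ≤ B := le_trans (le_abs_self M6) (by simp only [hBdef]; linarith)
  have hM7B : M7 ≤ B := le_trans (le_abs_self M7) (by simp only [hBdef]; linarith)
  have hBhess : ∀ x ∈ Metric.cthickening 1 (q '' (Icc 0 L)), ‖hessLM V x‖ ≤ B :=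
    fun x hx => (hM1 x hx).trans hM1B
  have hBDhess : ∀ x ∈ Metric.cthickening 1 (q '' (Icc 0 L)), ‖fderiv ℝ (hessLM V) x‖ ≤ B :=
    fun x hx => (hM2 x hx).trans hM2B
  have hBDDhess := fun x (hx : x ∈ Metric.cthickening 1 (q '' (Icc 0 L))) =>
    (hM3 x hx).trans hM3B
  have hBG : ∀ x ∈ Metric.cthickening 1 (q '' (Icc 0 L)), ‖G x‖ ≤ B :=
    fun x hx => (hM4 x hx).trans hM4B
  have hBDG : ∀ x ∈ Metric.cthickening 1 (q '' (Icc 0 L)), ‖fderiv ℝ G x‖ ≤ B :=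
    fun x hx => (hM5 x hx).trans hM5B
  have hBDDG : ∀ x ∈ Metric.cthickening 1 (q '' (Icc 0 L)),
      ‖fderiv ℝ (fderiv ℝ G) x‖ ≤ B := fun x hx => (hM6 x hx).trans hM6B
  have hBq'' : ∀ θ : ℝ, ‖deriv (deriv q) θ‖ ≤ B := fun θ => (hMq θ).trans hM7B
  refine ⟨min δ₁ (1/(2*CΦ)), lt_min hδ₁ (one_div_pos.2 (by linarith)),
    200*(B^2+B+1)*(CΦ^2+CΦ+1)+1, ?_, ?_⟩
  · have h1 : (0:ℝ) < B^2+B+1 := by linarith [sq_nonneg B]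
    have h2 : (0:ℝ) < CΦ^2+CΦ+1 := by linarith [sq_nonneg CΦ]
    linarith [mul_pos h1 h2]
  intro δ hδpos hδle θ
  obtain ⟨hΦ2, hΦper, hΦorth, hΦbnd, -⟩ := hΦ δ ⟨hδpos, hδle.trans (min_le_left _ _)⟩
  have hφd : Differentiable ℝ (Φ δ) := hΦ2.differentiable (by norm_num)
  have hΦ11 : ContDiff ℝ (1+1 : WithTop ℕ∞) (Φ δ) := by
    have h2 : ((2:WithTop ℕ∞)) = 1+1 := by norm_num
    rwa [h2] at hΦ2
  have hdφ1 : ContDiff ℝ 1 (deriv (Φ δ)) := (contDiff_succ_iff_deriv.1 hΦ11).2.2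
  have hdφd : Differentiable ℝ (deriv (Φ δ)) := hdφ1.differentiable (by norm_num)
  have hε0 : (0:ℝ) ≤ CΦ * δ := by positivity
  have hεhalf : CΦ * δ ≤ 1/2 := by
    have h1 : δ ≤ 1/(2*CΦ) := hδle.trans (min_le_right _ _)
    have h2 := mul_le_mul_of_nonneg_left h1 hCΦ.le
    rwa [show CΦ * (1/(2*CΦ)) = 1/2 by field_simp] at h2
  obtain ⟨hpnorm, hp1norm, hp2norm⟩ := hΦbnd θ
  have hpnorm1 : ‖Φ δ θ‖ ≤ 1 := hpnorm.trans (by linarith)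
  have hsegK : segment ℝ (q θ) (q θ + Φ δ θ) ⊆ Metric.cthickening 1 (q '' (Icc 0 L)) := by
    intro y hy
    have h1 : ‖y - q θ‖ ≤ ‖Φ δ θ‖ := seg_norm hy
    exact Metric.mem_cthickening_of_dist_le y (q θ) 1 _ (hqS θ)
      (by rw [dist_eq_norm]; exact h1.trans hpnorm1)
  have hxtK : q θ + Φ δ θ ∈ Metric.cthickening 1 (q '' (Icc 0 L)) :=
    hsegK (right_mem_segment ℝ _ _)
  -- Taylor estimates
  have htay1 : ‖gradient V (q θ + Φ δ θ) - hessLM V (q θ) (Φ δ θ)‖ ≤ B * (CΦ*δ)^2 := by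
    have key := taylor_on_ball (f := gradient V) (f' := hessLM V)
      (grad_hasFDerivAt hV) (hess_hasFDerivAt hV) (x := q θ) (p := Φ δ θ) (M := B)
      (fun y hy => hBDhess y (hsegK hy))
    rw [hgrad θ, sub_zero] at key
    calc ‖gradient V (q θ + Φ δ θ) - hessLM V (q θ) (Φ δ θ)‖
        ≤ B * ‖Φ δ θ‖ * ‖Φ δ θ‖ := key
    _ ≤ B * (CΦ*δ) * (CΦ*δ) :=
        mul_le_mul (mul_le_mul_of_nonneg_left hpnorm hB0) hpnorm (norm_nonneg _) (by positivity)
    _ = B * (CΦ*δ)^2 := by ring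
  have htay2 : ‖hessLM V (q θ + Φ δ θ) - hessLM V (q θ)
        - fderiv ℝ (hessLM V) (q θ) (Φ δ θ)‖ ≤ B * (CΦ*δ)^2 := by
    have key := taylor_on_ball (f := hessLM V) (f' := fderiv ℝ (hessLM V))
      (hess_hasFDerivAt hV) (fun y => (hDhessDiff y).hasFDerivAt)
      (x := q θ) (p := Φ δ θ) (M := B)
      (fun y hy => hBDDhess y (hsegK hy))
    calc ‖hessLM V (q θ + Φ δ θ) - hessLM V (q θ) - fderiv ℝ (hessLM V) (q θ) (Φ δ θ)‖
        ≤ B * ‖Φ δ θ‖ * ‖Φ δ θ‖ := key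
    _ ≤ B * (CΦ*δ) * (CΦ*δ) :=
        mul_le_mul (mul_le_mul_of_nonneg_left hpnorm hB0) hpnorm (norm_nonneg _) (by positivity)
    _ = B * (CΦ*δ)^2 := by ring
  have hGlip : ‖G (q θ + Φ δ θ) - G (q θ)‖ ≤ B * (CΦ*δ) := by
    have key := lip_on_segment (f := G) (f' := fderiv ℝ G)
      (fun y => (hGdiff y).hasFDerivAt) (x := q θ) (p := Φ δ θ) (M := B)
      (fun y hy => hBDG y (hsegK hy))
    exact key.trans (mul_le_mul_of_nonneg_left hpnorm hB0)
  have hDGlip : ‖fderiv ℝ G (q θ + Φ δ θ) - fderiv ℝ G (q θ)‖ ≤ B * (CΦ*δ) := by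
    have key := lip_on_segment (f := fderiv ℝ G) (f' := fderiv ℝ (fderiv ℝ G))
      (fun y => (hDGdiff y).hasFDerivAt) (x := q θ) (p := Φ δ θ) (M := B)
      (fun y hy => hBDDG y (hsegK hy))
    exact key.trans (mul_le_mul_of_nonneg_left hpnorm hB0)
  have hDpbnd : ‖fderiv ℝ (hessLM V) (q θ) (Φ δ θ)‖ ≤ B * (CΦ*δ) :=
    op_bound (hBDhess _ (hxK θ)) hpnorm
  -- derivative facts for the curve
  have hq1has : HasDerivAt q (deriv q θ) θ := (hqd θ).hasDerivAt
  have hq2has : HasDerivAt (deriv q) (deriv (deriv q) θ) θ := (hdqd θ).hasDerivAt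
  have he1e2 : ⟪deriv q θ, deriv (deriv q) θ⟫ = 0 := by
    have hone : (fun ϑ : ℝ => ⟪deriv q ϑ, deriv q ϑ⟫) = fun _ => (1:ℝ) := funext fun s => by
      rw [real_inner_self_eq_norm_mul_norm, hqunit s]; norm_num
    have hder : HasDerivAt (fun ϑ : ℝ => ⟪deriv q ϑ, deriv q ϑ⟫)
        (⟪deriv q θ, deriv (deriv q) θ⟫ + ⟪deriv (deriv q) θ, deriv q θ⟫) θ :=
      hq2has.inner ℝ hq2has
    rw [hone] at hder
    have h0 := hder.unique (hasDerivAt_const θ 1)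
    have hc := real_inner_comm (deriv q θ) (deriv (deriv q) θ)
    linarith [h0.symm, hc]
  have hp1has : HasDerivAt (Φ δ) (deriv (Φ δ) θ) θ := (hφd θ).hasDerivAt
  have hp2has : HasDerivAt (deriv (Φ δ)) (deriv (deriv (Φ δ)) θ) θ := (hdφd θ).hasDerivAt
  have hqt : HasDerivAt (fun s => q s + Φ δ s) (deriv q θ + deriv (Φ δ) θ) θ :=
    hq1has.add hp1has
  have hv_eq : deriv (fun s => q s + Φ δ s) = fun s => deriv q s + deriv (Φ δ) s :=
    funext fun s => ((hqd s).hasDerivAt.add (hφd s).hasDerivAt).deriv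
  have hvd : HasDerivAt (fun s => deriv q s + deriv (Φ δ) s)
      (deriv (deriv q) θ + deriv (deriv (Φ δ)) θ) θ := hq2has.add hp2has
  have hN1 : |‖deriv q θ + deriv (Φ δ) θ‖ - 1| ≤ CΦ * δ := by
    have h := abs_norm_sub_norm_le (deriv q θ + deriv (Φ δ) θ) (deriv q θ)
    rw [add_sub_cancel_left, hqunit θ] at h
    exact h.trans hp1norm
  have hNpos : 0 < ‖deriv q θ + deriv (Φ δ) θ‖ := by
    have := abs_le.1 hN1
    linarith
  have hne : ⟪deriv q θ + deriv (Φ δ) θ, deriv q θ + deriv (Φ δ) θ⟫ ≠ (0:ℝ) := by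
    rw [real_inner_self_eq_norm_mul_norm]
    exact ne_of_gt (mul_pos hNpos hNpos)
  have hvv : HasDerivAt (fun ϑ : ℝ => ⟪deriv q ϑ + deriv (Φ δ) ϑ, deriv q ϑ + deriv (Φ δ) ϑ⟫)
      (⟪deriv q θ + deriv (Φ δ) θ, deriv (deriv q) θ + deriv (deriv (Φ δ)) θ⟫
        + ⟪deriv (deriv q) θ + deriv (deriv (Φ δ)) θ, deriv q θ + deriv (Φ δ) θ⟫) θ :=
    hvd.inner ℝ hvd
  have hNhas : HasDerivAt (fun ϑ => ‖deriv q ϑ + deriv (Φ δ) ϑ‖)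
      (⟪deriv q θ + deriv (Φ δ) θ, deriv (deriv q) θ + deriv (deriv (Φ δ)) θ⟫
        / ‖deriv q θ + deriv (Φ δ) θ‖) θ := by
    have hs := hvv.sqrt hne
    have hfun : (fun ϑ : ℝ => Real.sqrt ⟪deriv q ϑ + deriv (Φ δ) ϑ, deriv q ϑ + deriv (Φ δ) ϑ⟫)
        = fun ϑ => ‖deriv q ϑ + deriv (Φ δ) ϑ‖ := funext fun s => by
      rw [real_inner_self_eq_norm_mul_norm, Real.sqrt_mul_self (norm_nonneg _)]
    rw [hfun] at hs
    convert hs using 1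
    rw [real_inner_comm (deriv (deriv q) θ + deriv (deriv (Φ δ)) θ)
      (deriv q θ + deriv (Φ δ) θ), real_inner_self_eq_norm_mul_norm,
      Real.sqrt_mul_self (norm_nonneg _)]
    field_simp
    ring
  have hNinvhas : HasDerivAt (fun ϑ => ‖deriv q ϑ + deriv (Φ δ) ϑ‖⁻¹)
      (-(⟪deriv q θ + deriv (Φ δ) θ, deriv (deriv q) θ + deriv (deriv (Φ δ)) θ⟫
          / ‖deriv q θ + deriv (Φ δ) θ‖) / ‖deriv q θ + deriv (Φ δ) θ‖ ^ 2) θ :=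
    hNhas.inv hNpos.ne'
  have hwhas : HasDerivAt (fun ϑ => -(gradient V (q ϑ + Φ δ ϑ)) + δ • G (q ϑ + Φ δ ϑ))
      (-(hessLM V (q θ + Φ δ θ) (deriv q θ + deriv (Φ δ) θ))
        + δ • (fderiv ℝ G (q θ + Φ δ θ) (deriv q θ + deriv (Φ δ) θ))) θ :=
    (((grad_hasFDerivAt hV _).comp_hasDerivAt θ hqt).neg).add
      ((((hGdiff _).hasFDerivAt).comp_hasDerivAt θ hqt).const_smul δ)
  have hIPhas : HasDerivAt (fun ϑ => ⟪-(gradient V (q ϑ + Φ δ ϑ)) + δ • G (q ϑ + Φ δ ϑ),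
        deriv q ϑ + deriv (Φ δ) ϑ⟫)
      (⟪-(gradient V (q θ + Φ δ θ)) + δ • G (q θ + Φ δ θ),
          deriv (deriv q) θ + deriv (deriv (Φ δ)) θ⟫
        + ⟪-(hessLM V (q θ + Φ δ θ) (deriv q θ + deriv (Φ δ) θ))
            + δ • (fderiv ℝ G (q θ + Φ δ θ) (deriv q θ + deriv (Φ δ) θ)),
          deriv q θ + deriv (Φ δ) θ⟫) θ := hwhas.inner ℝ hvd
  have hBthas : HasDerivAt (fun ϑ => ‖deriv q ϑ + deriv (Φ δ) ϑ‖⁻¹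
        * ⟪-(gradient V (q ϑ + Φ δ ϑ)) + δ • G (q ϑ + Φ δ ϑ), deriv q ϑ + deriv (Φ δ) ϑ⟫)
      (-(⟪deriv q θ + deriv (Φ δ) θ, deriv (deriv q) θ + deriv (deriv (Φ δ)) θ⟫
            / ‖deriv q θ + deriv (Φ δ) θ‖) / ‖deriv q θ + deriv (Φ δ) θ‖ ^ 2
          * ⟪-(gradient V (q θ + Φ δ θ)) + δ • G (q θ + Φ δ θ), deriv q θ + deriv (Φ δ) θ⟫
        + ‖deriv q θ + deriv (Φ δ) θ‖⁻¹
          * (⟪-(gradient V (q θ + Φ δ θ)) + δ • G (q θ + Φ δ θ),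
              deriv (deriv q) θ + deriv (deriv (Φ δ)) θ⟫
            + ⟪-(hessLM V (q θ + Φ δ θ) (deriv q θ + deriv (Φ δ) θ))
                + δ • (fderiv ℝ G (q θ + Φ δ θ) (deriv q θ + deriv (Φ δ) θ)),
              deriv q θ + deriv (Φ δ) θ⟫)) θ := hNinvhas.mul hIPhas
  -- the master estimate
  have halg := drift_algebra δ (CΦ*δ) B (deriv q θ) (deriv (deriv q) θ) (Φ δ θ)
    (deriv (Φ δ) θ) (deriv (deriv (Φ δ)) θ) (gradient V (q θ + Φ δ θ))
    (G (q θ + Φ δ θ)) (G (q θ))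
    (hessLM V (q θ)) (hessLM V (q θ + Φ δ θ)) (fderiv ℝ G (q θ)) (fderiv ℝ G (q θ + Φ δ θ))
    (fderiv ℝ (hessLM V) (q θ) (Φ δ θ)) (fderiv ℝ (hessLM V) (q θ) (deriv q θ))
    hδpos.le hε0 hεhalf hB1
    (hBhess _ (hxK θ)) (hBhess _ hxtK) (hBDG _ (hxK θ)) (hBDG _ hxtK)
    (hBG _ (hxK θ)) (hBG _ hxtK) (hBq'' θ)
    hDpbnd htay1 htay2 hGlip hDGlip (hqunit θ) he1e2
    hpnorm hp1norm hp2norm (hess_symm hV (q θ)) (hHtan θ)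
    (hessD_transfer hV (q θ) (Φ δ θ) (deriv q θ)) (curve_identity hV hq hHtan θ)
  obtain ⟨c1, c2⟩ := halg
  have hcoeff := coeff_lemma B CΦ δ hB1 hCΦ
  constructor
  · have g1 : ⟪-(gradient V (q θ + Φ δ θ)) + δ • G (q θ + Φ δ θ),
        ‖deriv (fun s => q s + Φ δ s) θ‖⁻¹ • deriv (fun s => q s + Φ δ s) θ⟫
        = ‖deriv q θ + deriv (Φ δ) θ‖⁻¹ * ⟪-(gradient V (q θ + Φ δ θ)) + δ • G (q θ + Φ δ θ),
            deriv q θ + deriv (Φ δ) θ⟫ := by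
      rw [hv_eq]
      exact real_inner_smul_right _ _ _
    rw [g1]
    exact c1.trans hcoeff
  · have g2 : deriv (fun ϑ => δ * ⟪G (q ϑ), deriv q ϑ⟫) θ
        = δ * (⟪G (q θ), deriv (deriv q) θ⟫
            + ⟪fderiv ℝ G (q θ) (deriv q θ), deriv q θ⟫) := by
      have h := ((((hGdiff (q θ)).hasFDerivAt).comp_hasDerivAt θ hq1has).inner
        ℝ hq2has).const_mul δ
      exact h.deriv
    have hfe : (fun ϑ => ⟪-(gradient V (q ϑ + Φ δ ϑ)) + δ • G (q ϑ + Φ δ ϑ),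
          ‖deriv (fun s => q s + Φ δ s) ϑ‖⁻¹ • deriv (fun s => q s + Φ δ s) ϑ⟫)
        = (fun ϑ => ‖deriv q ϑ + deriv (Φ δ) ϑ‖⁻¹
            * ⟪-(gradient V (q ϑ + Φ δ ϑ)) + δ • G (q ϑ + Φ δ ϑ),
                deriv q ϑ + deriv (Φ δ) ϑ⟫) := by
      funext s
      rw [hv_eq]
      exact real_inner_smul_right _ _ _
    rw [g2, hfe, hBthas.deriv]
    exact c2.trans hcoeff


end
end

section
/- Fix any constant C₀ > 0. There exists δ₀ > 0 such that for all 0 < δ ≤ δ₀ and every point Z ∈ ℝⁿ with dist(Z, M^δ) = C₀ δ^{1/2}, one has ⟨−∇V[Z] + δG[Z], Z − q_δ(p_δ(Z))⟩ < 0; consequently the perturbed flow points strictly inward on the boundary of the tube {Z : dist(Z, M^δ) ≤ C₀δ^{1/2}}. -/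
noncomputable section

open MeasureTheory Set Filter RealInnerProductSpace

set_option maxHeartbeats 1000000 in
/-- Auxiliary scalar estimate used in the proof of `inward_pointing_flow`. -/
private lemma ipf_final (lam C₀ CΦ MH M3 MG δ d t X S2 S3 S4 S5 S6 : ℝ)
    (hlam : 0 < lam) (hC₀ : 0 < C₀) (hCΦ : 0 < CΦ)
    (hMH : 0 ≤ MH) (hM3 : 0 ≤ M3) (hMG : 0 ≤ MG)
    (hδpos : 0 < δ) (hd : d = C₀ * Real.sqrt δ)
    (hδ4CΦ : δ ≤ 1 / (4 * CΦ))
    (hδe2 : δ ≤ lam / (12 * (MH * CΦ + 1)))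
    (hδe3 : δ ≤ lam / (12 * (M3 * CΦ + 1)))
    (hδe4 : δ ≤ (lam * C₀ / (12 * (MH * CΦ + 1))) ^ 2)
    (hδe5 : δ ≤ (lam / (12 * C₀ * (M3 + 1))) ^ 2)
    (hδe6 : δ ≤ (lam * C₀ / (12 * (MG + 1))) ^ 2)
    (htb : |t| ≤ CΦ * δ * d)
    (hX : lam * d ^ 2 - lam * t ^ 2 ≤ X)
    (h2 : |S2| ≤ MH * CΦ * δ * d * d) (h3 : |S3| ≤ M3 * (CΦ * δ) * d * d)
    (h4 : |S4| ≤ MH * (CΦ * δ) * d) (h5 : |S5| ≤ M3 * d * d * d)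
    (h6 : |S6| ≤ MG * d) :
    -X - S2 - S3 - S4 - S5 + δ * S6 < 0 := by
  have hsqpos : 0 < Real.sqrt δ := Real.sqrt_pos.2 hδpos
  have hdpos : 0 < d := by rw [hd]; exact mul_pos hC₀ hsqpos
  have hd2 : d ^ 2 = C₀ ^ 2 * δ := by rw [hd, mul_pow, Real.sq_sqrt hδpos.le]
  have sqrt_le : ∀ c : ℝ, 0 ≤ c → δ ≤ c ^ 2 → Real.sqrt δ ≤ c := fun c hc h => by
    calc Real.sqrt δ ≤ Real.sqrt (c ^ 2) := Real.sqrt_le_sqrt h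
      _ = c := Real.sqrt_sq hc
  have hCΦδ4 : CΦ * δ ≤ 1 / 4 := by
    have h := mul_le_mul_of_nonneg_left hδ4CΦ hCΦ.le
    have h2 : CΦ * (1 / (4 * CΦ)) = 1 / 4 := by field_simp [mul_comm]
    linarith
  have master2 : ∀ a : ℝ, 0 ≤ a → δ ≤ lam / (12 * (a + 1)) → a * δ ≤ lam / 12 := by
    intro a ha hδa
    have hpos : (0:ℝ) < 12 * (a + 1) := by positivity
    rw [le_div_iff₀ hpos] at hδa
    rw [le_div_iff₀ (by norm_num : (0:ℝ) < 12)]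
    nlinarith [hδpos.le]
  have master : ∀ a : ℝ, 0 ≤ a → δ ≤ (lam * C₀ / (12 * (a + 1))) ^ 2 →
      a * δ * d ≤ lam / 12 * d ^ 2 := by
    intro a ha hδa
    have hpos : (0:ℝ) < 12 * (a + 1) := by positivity
    have hs : Real.sqrt δ ≤ lam * C₀ / (12 * (a + 1)) := sqrt_le _ (by positivity) hδa
    have hs' : Real.sqrt δ * (12 * (a + 1)) ≤ lam * C₀ := by
      rw [← le_div_iff₀ hpos]; exact hs
    rw [hd2, hd]
    nlinarith [mul_le_mul_of_nonneg_right hs' (mul_nonneg hC₀.le hδpos.le),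
      mul_nonneg (mul_nonneg hC₀.le hδpos.le) (Real.sqrt_nonneg δ)]
  have ht2 : t ^ 2 ≤ 1 / 12 * d ^ 2 := by
    have habs : t * t ≤ (CΦ * δ * d) * (CΦ * δ * d) := by
      have h := mul_self_le_mul_self (abs_nonneg t) htb
      rwa [abs_mul_abs_self] at h
    have hq : (CΦ * δ) * (CΦ * δ) ≤ 1 / 16 := by
      nlinarith [hCΦδ4, mul_nonneg hCΦ.le hδpos.le]
    have h4 : ((CΦ * δ) * (CΦ * δ)) * (d * d) ≤ (1 / 16) * (d * d) :=
      mul_le_mul_of_nonneg_right hq (mul_self_nonneg d)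
    nlinarith [habs, h4, mul_self_nonneg d]
  have hs1 : lam * t ^ 2 ≤ lam / 12 * d ^ 2 := by
    nlinarith [mul_le_mul_of_nonneg_left ht2 hlam.le]
  have hs2 : MH * CΦ * δ * d * d ≤ lam / 12 * d ^ 2 := by
    have h := master2 (MH * CΦ) (mul_nonneg hMH hCΦ.le) hδe2
    nlinarith [sq_nonneg d, hdpos.le]
  have hs3 : M3 * (CΦ * δ) * d * d ≤ lam / 12 * d ^ 2 := by
    have h := master2 (M3 * CΦ) (mul_nonneg hM3 hCΦ.le) hδe3
    nlinarith [sq_nonneg d, hdpos.le]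
  have hs4 : MH * (CΦ * δ) * d ≤ lam / 12 * d ^ 2 := by
    have h := master (MH * CΦ) (mul_nonneg hMH hCΦ.le) hδe4
    nlinarith [h]
  have hs6 : MG * δ * d ≤ lam / 12 * d ^ 2 := master MG hMG hδe6
  have hs5 : M3 * d * d * d ≤ lam / 12 * d ^ 2 := by
    have hs := sqrt_le _ (by positivity) hδe5
    have hdle : d ≤ lam / (12 * (M3 + 1)) := by
      have h := mul_le_mul_of_nonneg_left hs hC₀.le
      have h2 : C₀ * (lam / (12 * C₀ * (M3 + 1))) = lam / (12 * (M3 + 1)) := by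
        field_simp
      rw [hd]; linarith
    have h2 : M3 * d ≤ lam / 12 := by
      have hpos : (0:ℝ) < 12 * (M3 + 1) := by positivity
      rw [le_div_iff₀ hpos] at hdle
      rw [le_div_iff₀ (by norm_num : (0:ℝ) < 12)]
      nlinarith [hdpos.le]
    nlinarith [sq_nonneg d, hdpos.le]
  have c2 : -S2 ≤ lam / 12 * d ^ 2 := ((neg_le_abs _).trans h2).trans hs2
  have c3 : -S3 ≤ lam / 12 * d ^ 2 := ((neg_le_abs _).trans h3).trans hs3
  have c4 : -S4 ≤ lam / 12 * d ^ 2 := ((neg_le_abs _).trans h4).trans hs4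
  have c5 : -S5 ≤ lam / 12 * d ^ 2 := ((neg_le_abs _).trans h5).trans hs5
  have c6 : δ * S6 ≤ lam / 12 * d ^ 2 := by
    have hh := mul_le_mul_of_nonneg_left ((abs_le.mp h6).2) hδpos.le
    have hring : δ * (MG * d) = MG * δ * d := by ring
    linarith [hh, hs6]
  have hfin : 0 < lam / 2 * d ^ 2 := by positivity
  linarith [hX, hs1, c2, c3, c4, c5, c6]

set_option maxHeartbeats 1000000 in
/-- The perturbed flow points strictly inward on the boundary of the whole tube
of radius `C₀ δ^(1/2)` around `M^δ`. -/
theorem inward_pointing_flow {n : ℕ}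
    (V : EuclideanSpace ℝ (Fin n) → ℝ) (G : EuclideanSpace ℝ (Fin n) → EuclideanSpace ℝ (Fin n))
    (q : ℝ → EuclideanSpace ℝ (Fin n)) (L lam : ℝ)
    (hV : ContDiff ℝ 4 V) (hG : ContDiff ℝ 2 G)
    (hL : 0 < L) (hq : ContDiff ℝ 3 q) (hqper : Function.Periodic q L)
    (hqunit : ∀ θ, ‖deriv q θ‖ = 1)
    (hqinj : ∀ θ₁ θ₂ : ℝ, q θ₁ = q θ₂ → ∃ k : ℤ, θ₂ - θ₁ = k * L)
    (hgrad : ∀ θ, gradient V (q θ) = 0) (hV0 : ∀ θ, V (q θ) = 0)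
    (hHtan : ∀ θ, hessLM V (q θ) (deriv q θ) = 0)
    (hlam : 0 < lam)
    (hspec : ∀ θ : ℝ, ∀ w : EuclideanSpace ℝ (Fin n), ⟪w, deriv q θ⟫ = 0 →
      lam * ‖w‖ ^ 2 ≤ ⟪hessLM V (q θ) w, w⟫)
    (Φ : ℝ → ℝ → EuclideanSpace ℝ (Fin n)) (δ₁ CΦ : ℝ) (hδ₁ : 0 < δ₁) (hCΦ : 0 < CΦ)
    (hΦ : ∀ δ ∈ Ioc (0:ℝ) δ₁, ContDiff ℝ 2 (Φ δ) ∧ Function.Periodic (Φ δ) L ∧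
      (∀ θ, ⟪Φ δ θ, deriv q θ⟫ = 0) ∧
      (∀ θ, ‖Φ δ θ‖ ≤ CΦ * δ ∧ ‖deriv (Φ δ) θ‖ ≤ CΦ * δ ∧ ‖deriv (deriv (Φ δ)) θ‖ ≤ CΦ * δ) ∧
      flowInvariant V G δ (Mset q Φ δ))
    (Qd : ℝ → ℝ → EuclideanSpace ℝ (Fin n)) (Ld : ℝ → ℝ)
    (hQd : ∀ δ ∈ Ioc (0:ℝ) δ₁, 0 < Ld δ ∧ Function.Periodic (Qd δ) (Ld δ) ∧
      (∀ φ, ‖deriv (Qd δ) φ‖ = 1) ∧ Set.range (Qd δ) = Mset q Φ δ)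
    (Pd : ℝ → EuclideanSpace ℝ (Fin n) → ℝ) (r₀ : ℝ) (hr₀ : 0 < r₀)
    (hPd : ∀ δ ∈ Ioc (0:ℝ) δ₁, ∀ Z : EuclideanSpace ℝ (Fin n), Metric.infDist Z (Mset q Φ δ) ≤ r₀ →
      ‖Z - Qd δ (Pd δ Z)‖ = Metric.infDist Z (Mset q Φ δ))
    :
    ∀ C₀ > (0:ℝ), ∃ δ₀ > (0:ℝ), ∀ δ : ℝ, 0 < δ → δ ≤ δ₀ →
      ∀ Z : EuclideanSpace ℝ (Fin n), Metric.infDist Z (Mset q Φ δ) = C₀ * Real.sqrt δ →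
        ⟪-(gradient V Z) + δ • G Z, Z - Qd δ (Pd δ Z)⟫ < 0 := by
  intro C₀ hC₀
  -- regularity of the gradient and the Hessian
  have hgradCD : ContDiff ℝ 3 (gradient V) := by
    have h1 : ContDiff ℝ 3 (fderiv ℝ V) := hV.fderiv_right (by norm_num)
    exact ((InnerProductSpace.toDual ℝ (EuclideanSpace ℝ (Fin n))).symm.contDiff).comp h1
  have hgraddiff : ∀ x, HasFDerivAt (gradient V) (hessLM V x) x := fun x =>
    (hgradCD.differentiable (by norm_num) x).hasFDerivAt
  have hhessCD : ContDiff ℝ 2 (hessLM V) := hgradCD.fderiv_right (by norm_num)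
  have hhesscont : Continuous (hessLM V) := hhessCD.continuous
  have hhess'cont : Continuous (fderiv ℝ (hessLM V)) :=
    (hhessCD.fderiv_right (m := 1) (by norm_num)).continuous
  have hhessdiff : ∀ x, HasFDerivAt (hessLM V) (fderiv ℝ (hessLM V) x) x := fun x =>
    (hhessCD.differentiable (by norm_num) x).hasFDerivAt
  -- a bound on ‖q‖
  obtain ⟨RM, hRM⟩ : ∃ RM : ℝ, ∀ θ, ‖q θ‖ ≤ RM := by
    obtain ⟨C, hC⟩ := (isCompact_Icc (a := (0:ℝ)) (b := L)).exists_bound_of_continuousOn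
      hq.continuous.continuousOn
    refine ⟨C, fun θ => ?_⟩
    obtain ⟨y, hy, hqy⟩ := hqper.exists_mem_Ico₀ hL θ
    rw [hqy]; exact hC y ⟨hy.1, hy.2.le⟩
  -- a compact convex set containing everything relevant
  set K : Set (EuclideanSpace ℝ (Fin n)) := Metric.closedBall 0 (RM + 1) with hKdef
  have hKconv : Convex ℝ K := convex_closedBall _ _
  have hKcomp : IsCompact K := isCompact_closedBall _ _
  have hmemK : ∀ x : EuclideanSpace ℝ (Fin n), ‖x‖ ≤ RM + 1 → x ∈ K := fun x hx => by
    simp only [hKdef, Metric.mem_closedBall, dist_zero_right]; exact hx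
  -- uniform bounds on compacts
  obtain ⟨MG, hMG0, hMG⟩ : ∃ C : ℝ, 0 ≤ C ∧ ∀ x ∈ K, ‖G x‖ ≤ C := by
    obtain ⟨C, hC⟩ := hKcomp.exists_bound_of_continuousOn hG.continuous.continuousOn
    exact ⟨max C 0, le_max_right _ _, fun x hx => (hC x hx).trans (le_max_left _ _)⟩
  obtain ⟨MH, hMH0, hMH⟩ : ∃ C : ℝ, 0 ≤ C ∧ ∀ x ∈ K, ‖hessLM V x‖ ≤ C := by
    obtain ⟨C, hC⟩ := hKcomp.exists_bound_of_continuousOn hhesscont.continuousOn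
    exact ⟨max C 0, le_max_right _ _, fun x hx => (hC x hx).trans (le_max_left _ _)⟩
  obtain ⟨M3, hM30, hM3⟩ : ∃ C : ℝ, 0 ≤ C ∧ ∀ x ∈ K, ‖fderiv ℝ (hessLM V) x‖ ≤ C := by
    obtain ⟨C, hC⟩ := hKcomp.exists_bound_of_continuousOn (f := fderiv ℝ (hessLM V)) (by exact hhess'cont.continuousOn)
    exact ⟨max C 0, le_max_right _ _, fun x hx => (hC x hx).trans (le_max_left _ _)⟩
  -- Lipschitz estimates on K
  have lipGrad : ∀ a ∈ K, ∀ b ∈ K, ‖gradient V b - gradient V a‖ ≤ MH * ‖b - a‖ :=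
    fun a ha b hb => hKconv.norm_image_sub_le_of_norm_hasFDerivWithin_le
      (fun x hx => (hgraddiff x).hasFDerivWithinAt) hMH ha hb
  have lipHess : ∀ a ∈ K, ∀ b ∈ K, ‖hessLM V b - hessLM V a‖ ≤ M3 * ‖b - a‖ :=
    fun a ha b hb => hKconv.norm_image_sub_le_of_norm_hasFDerivWithin_le
      (fun x hx => (hhessdiff x).hasFDerivWithinAt) hM3 ha hb
  -- the choice of δ₀
  refine ⟨min δ₁ (min ((r₀ / C₀) ^ 2) (min (1 / (2 * CΦ)) (min (1 / (4 * CΦ))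
      (min (lam / (12 * (MH * CΦ + 1))) (min (lam / (12 * (M3 * CΦ + 1)))
      (min ((lam * C₀ / (12 * (MH * CΦ + 1))) ^ 2)
      (min ((lam / (12 * C₀ * (M3 + 1))) ^ 2)
      (min ((lam * C₀ / (12 * (MG + 1))) ^ 2) ((1 / (2 * C₀)) ^ 2))))))))), ?_, ?_⟩
  · have hp1 : (0:ℝ) < (r₀ / C₀) ^ 2 := by positivity
    have hp2 : (0:ℝ) < 1 / (2 * CΦ) := by positivity
    have hp3 : (0:ℝ) < 1 / (4 * CΦ) := by positivity
    have hp4 : (0:ℝ) < lam / (12 * (MH * CΦ + 1)) := by positivity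
    have hp5 : (0:ℝ) < lam / (12 * (M3 * CΦ + 1)) := by positivity
    have hp6 : (0:ℝ) < (lam * C₀ / (12 * (MH * CΦ + 1))) ^ 2 := by positivity
    have hp7 : (0:ℝ) < (lam / (12 * C₀ * (M3 + 1))) ^ 2 := by positivity
    have hp8 : (0:ℝ) < (lam * C₀ / (12 * (MG + 1))) ^ 2 := by positivity
    have hp9 : (0:ℝ) < (1 / (2 * C₀)) ^ 2 := by positivity
    exact lt_min hδ₁ (lt_min hp1 (lt_min hp2 (lt_min hp3 (lt_min hp4 (lt_min hp5
      (lt_min hp6 (lt_min hp7 (lt_min hp8 hp9))))))))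
  intro δ hδpos hδle Z hZ
  simp only [le_min_iff] at hδle
  obtain ⟨hδδ₁, hδr₀, hδ2CΦ, hδ4CΦ, hδe2, hδe3, hδe4, hδe5, hδe6, hδd1⟩ := hδle
  have hδmem : δ ∈ Ioc (0:ℝ) δ₁ := ⟨hδpos, hδδ₁⟩
  obtain ⟨hΦcd, hΦper, hΦorth, hΦbnd, -⟩ := hΦ δ hδmem
  obtain ⟨-, -, -, hQdrange⟩ := hQd δ hδmem
  have hsqpos : 0 < Real.sqrt δ := Real.sqrt_pos.2 hδpos
  set d : ℝ := C₀ * Real.sqrt δ with hd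
  have hdpos : 0 < d := mul_pos hC₀ hsqpos
  have hd2 : d ^ 2 = C₀ ^ 2 * δ := by
    rw [hd, mul_pow, Real.sq_sqrt hδpos.le]
  have sqrt_le : ∀ c : ℝ, 0 ≤ c → δ ≤ c ^ 2 → Real.sqrt δ ≤ c := fun c hc h => by
    calc Real.sqrt δ ≤ Real.sqrt (c ^ 2) := Real.sqrt_le_sqrt h
      _ = c := Real.sqrt_sq hc
  have hdr₀ : d ≤ r₀ := by
    have h := mul_le_mul_of_nonneg_left (sqrt_le _ (by positivity) hδr₀) hC₀.le
    have h2 : C₀ * (r₀ / C₀) = r₀ := by field_simp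
    rw [hd]; linarith
  have hdhalf : d ≤ 1 / 2 := by
    have h := mul_le_mul_of_nonneg_left (sqrt_le _ (by positivity) hδd1) hC₀.le
    have h2 : C₀ * (1 / (2 * C₀)) = 1 / 2 := by field_simp [mul_comm]
    rw [hd]; linarith
  have hCΦδhalf : CΦ * δ ≤ 1 / 2 := by
    have h := mul_le_mul_of_nonneg_left hδ2CΦ hCΦ.le
    have h2 : CΦ * (1 / (2 * CΦ)) = 1 / 2 := by field_simp [mul_comm]
    linarith
  have hCΦδ4 : CΦ * δ ≤ 1 / 4 := by
    have h := mul_le_mul_of_nonneg_left hδ4CΦ hCΦ.le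
    have h2 : CΦ * (1 / (4 * CΦ)) = 1 / 4 := by field_simp [mul_comm]
    linarith
  -- the nearest point Y on the curve and its phase θ₀
  set Y : EuclideanSpace ℝ (Fin n) := Qd δ (Pd δ Z) with hYdef
  have hYmem : Y ∈ Mset q Φ δ := by rw [← hQdrange]; exact mem_range_self _
  have hZr₀ : Metric.infDist Z (Mset q Φ δ) ≤ r₀ := le_of_eq hZ |>.trans hdr₀
  have hwd : ‖Z - Y‖ = d := by
    rw [hYdef, hPd δ hδmem Z hZr₀, hZ]
  obtain ⟨θ₀, hθ₀⟩ : ∃ θ₀, q θ₀ + Φ δ θ₀ = Y := hYmem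
  set w : EuclideanSpace ℝ (Fin n) := Z - Y with hwdef
  have hu : ‖deriv q θ₀‖ = 1 := hqunit θ₀
  have hqdiff : HasDerivAt q (deriv q θ₀) θ₀ :=
    ((hq.differentiable (by norm_num)) θ₀).hasDerivAt
  have hΦdiff : HasDerivAt (Φ δ) (deriv (Φ δ) θ₀) θ₀ :=
    ((hΦcd.differentiable (by norm_num)) θ₀).hasDerivAt
  -- first-order condition at the minimizing phase
  have horth : ⟪w, deriv q θ₀ + deriv (Φ δ) θ₀⟫ = 0 := by
    have hcd : HasDerivAt (fun θ => Z - (q θ + Φ δ θ))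
        (0 - (deriv q θ₀ + deriv (Φ δ) θ₀)) θ₀ :=
      (hasDerivAt_const θ₀ Z).sub (hqdiff.add hΦdiff)
    have hder : HasDerivAt (fun θ => ⟪Z - (q θ + Φ δ θ), Z - (q θ + Φ δ θ)⟫)
        (⟪Z - (q θ₀ + Φ δ θ₀), 0 - (deriv q θ₀ + deriv (Φ δ) θ₀)⟫ +
          ⟪0 - (deriv q θ₀ + deriv (Φ δ) θ₀), Z - (q θ₀ + Φ δ θ₀)⟫) θ₀ :=
      HasDerivAt.inner ℝ hcd hcd
    have hmin : IsLocalMin (fun θ => ⟪Z - (q θ + Φ δ θ), Z - (q θ + Φ δ θ)⟫) θ₀ := by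
      refine Filter.Eventually.of_forall fun θ => ?_
      show ⟪Z - (q θ₀ + Φ δ θ₀), Z - (q θ₀ + Φ δ θ₀)⟫ ≤
        ⟪Z - (q θ + Φ δ θ), Z - (q θ + Φ δ θ)⟫
      have h1 : d ≤ ‖Z - (q θ + Φ δ θ)‖ := by
        rw [← hZ]
        have hmem : q θ + Φ δ θ ∈ Mset q Φ δ := ⟨θ, rfl⟩
        simpa [dist_eq_norm] using Metric.infDist_le_dist_of_mem hmem
      rw [hθ₀, ← hwdef, real_inner_self_eq_norm_sq, real_inner_self_eq_norm_sq, hwd]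
      exact pow_le_pow_left₀ hdpos.le h1 2
    have h0 := hmin.deriv_eq_zero
    rw [hder.deriv] at h0
    rw [hθ₀, ← hwdef, zero_sub, inner_neg_right, inner_neg_left] at h0
    have hcomm := real_inner_comm w (deriv q θ₀ + deriv (Φ δ) θ₀)
    linarith [h0, hcomm]
  set t : ℝ := ⟪w, deriv q θ₀⟫ with htdef
  have ht : t = -⟪w, deriv (Φ δ) θ₀⟫ := by
    rw [inner_add_right] at horth; rw [htdef]; linarith
  have htb : |t| ≤ CΦ * δ * d := by
    rw [ht, abs_neg]
    calc |⟪w, deriv (Φ δ) θ₀⟫| ≤ ‖w‖ * ‖deriv (Φ δ) θ₀‖ := abs_real_inner_le_norm _ _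
      _ ≤ d * (CΦ * δ) := by
          rw [hwd]
          exact mul_le_mul_of_nonneg_left (hΦbnd θ₀).2.1 hdpos.le
      _ = CΦ * δ * d := by ring
  set w₂ : EuclideanSpace ℝ (Fin n) := w - t • deriv q θ₀ with hw₂def
  have hw₂orth : ⟪w₂, deriv q θ₀⟫ = 0 := by
    rw [hw₂def, inner_sub_left, real_inner_smul_left, real_inner_self_eq_norm_sq, hu, ← htdef]
    ring
  have hw₂sq : ‖w₂‖ ^ 2 = d ^ 2 - t ^ 2 := by
    rw [hw₂def, norm_sub_sq_real, real_inner_smul_right, ← htdef, norm_smul, hwd, hu,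
      Real.norm_eq_abs]
    rw [mul_one, sq_abs]
    ring
  have hw₂le : ‖w₂‖ ≤ d := by
    have hsq : ‖w₂‖ ^ 2 ≤ d ^ 2 := by rw [hw₂sq]; nlinarith [sq_nonneg t]
    exact le_of_pow_le_pow_left₀ (by norm_num) hdpos.le hsq
  -- memberships in K
  have hΦb := (hΦbnd θ₀).1
  have hqθK : q θ₀ ∈ K := hmemK _ ((hRM θ₀).trans (by linarith))
  have hYnorm : ‖Y‖ ≤ RM + 1 / 2 := by
    have h1 : ‖Y‖ ≤ ‖q θ₀‖ + ‖Φ δ θ₀‖ := by rw [← hθ₀]; exact norm_add_le _ _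
    have h2 := hRM θ₀
    linarith
  have hYK : Y ∈ K := hmemK _ (by linarith)
  have hZK : Z ∈ K := hmemK _ (by
    have h1 : ‖Z‖ ≤ ‖Y‖ + ‖w‖ := by
      rw [hwdef]
      simpa using norm_add_le Y (Z - Y)
    rw [hwd] at h1
    linarith)
  -- closeness estimates coming from ‖Φ‖ ≤ CΦ δ
  have hYq : ‖Y - q θ₀‖ ≤ CΦ * δ := by
    have h2 : Y - q θ₀ = Φ δ θ₀ := by rw [← hθ₀]; abel
    rw [h2]; exact hΦb
  have hgY : ‖gradient V Y‖ ≤ MH * (CΦ * δ) := by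
    have h1 := lipGrad (q θ₀) hqθK Y hYK
    rw [hgrad θ₀, sub_zero] at h1
    exact h1.trans (mul_le_mul_of_nonneg_left hYq hMH0)
  have hHd : ‖hessLM V Y - hessLM V (q θ₀)‖ ≤ M3 * (CΦ * δ) := by
    have h1 := lipHess (q θ₀) hqθK Y hYK
    exact h1.trans (mul_le_mul_of_nonneg_left hYq hM30)
  -- Taylor remainder of the gradient along the segment [Y, Z]
  set Rem : EuclideanSpace ℝ (Fin n) :=
    gradient V Z - gradient V Y - hessLM V Y w with hRemdef
  have hRem : ‖Rem‖ ≤ M3 * d * d := by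
    have hseg : segment ℝ Y Z ⊆ K := hKconv.segment_subset hYK hZK
    have hbound : ∀ x ∈ segment ℝ Y Z, ‖hessLM V x - hessLM V Y‖ ≤ M3 * d := by
      intro x hx
      have h1 := lipHess Y hYK x (hseg hx)
      have h2 : ‖x - Y‖ ≤ d := by
        obtain ⟨a, b, ha, hb, hab, rfl⟩ := hx
        have ha' : a = 1 - b := by linarith
        have key : a • Y + b • Z - Y = b • w := by
          rw [ha', hwdef, sub_smul, one_smul, smul_sub]; abel
        rw [key, norm_smul, Real.norm_eq_abs, abs_of_nonneg hb, hwd]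
        have hb1 : b ≤ 1 := by linarith
        exact mul_le_of_le_one_left hdpos.le hb1
      exact h1.trans (mul_le_mul_of_nonneg_left h2 hM30)
    have hF : ∀ x ∈ segment ℝ Y Z, HasFDerivWithinAt (fun y => gradient V y - hessLM V Y y)
        (hessLM V x - hessLM V Y) (segment ℝ Y Z) x := fun x hx =>
      ((hgraddiff x).sub (hessLM V Y).hasFDerivAt).hasFDerivWithinAt
    have h3 := (convex_segment Y Z).norm_image_sub_le_of_norm_hasFDerivWithin_le hF hbound
      (left_mem_segment ℝ Y Z) (right_mem_segment ℝ Y Z)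
    have h4 : gradient V Z - hessLM V Y Z - (gradient V Y - hessLM V Y Y) = Rem := by
      rw [hRemdef, hwdef, map_sub]; abel
    rw [h4] at h3
    calc ‖Rem‖ ≤ M3 * d * ‖Z - Y‖ := h3
      _ = M3 * d * d := by rw [← hwdef, hwd]
  -- operator norm bounds
  have hH0w₂ : ‖hessLM V (q θ₀) w₂‖ ≤ MH * d :=
    (ContinuousLinearMap.le_opNorm _ _).trans
      (mul_le_mul (hMH _ hqθK) hw₂le (norm_nonneg _) hMH0)
  -- spectral gap
  have hsp : lam * ‖w₂‖ ^ 2 ≤ ⟪hessLM V (q θ₀) w₂, w₂⟫ := hspec θ₀ w₂ hw₂orth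
  have hspec2 : lam * d ^ 2 - lam * t ^ 2 ≤ ⟪hessLM V (q θ₀) w₂, w₂⟫ := by
    rw [hw₂sq] at hsp; linarith
  -- algebraic decomposition
  have hwsplit : w = w₂ + t • deriv q θ₀ := by rw [hw₂def]; abel
  have hgZ : gradient V Z = gradient V Y + hessLM V Y w + Rem := by
    rw [hRemdef]; abel
  have hH₀w : hessLM V (q θ₀) w = hessLM V (q θ₀) w₂ := by
    conv_lhs => rw [hwsplit]
    rw [map_add, ContinuousLinearMap.map_smul, hHtan θ₀, smul_zero, add_zero]
  have hid : ⟪-(gradient V Z) + δ • G Z, w⟫ =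
      -⟪hessLM V (q θ₀) w₂, w₂⟫ - t * ⟪hessLM V (q θ₀) w₂, deriv q θ₀⟫
        - ⟪(hessLM V Y - hessLM V (q θ₀)) w, w⟫ - ⟪gradient V Y, w⟫ - ⟪Rem, w⟫
        + δ * ⟪G Z, w⟫ := by
    have h1 : ⟪-(gradient V Z) + δ • G Z, w⟫ = -⟪gradient V Z, w⟫ + δ * ⟪G Z, w⟫ := by
      rw [inner_add_left, inner_neg_left, real_inner_smul_left]
    have h2 : ⟪gradient V Z, w⟫ = ⟪gradient V Y, w⟫ + ⟪hessLM V Y w, w⟫ + ⟪Rem, w⟫ := by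
      rw [hgZ, inner_add_left, inner_add_left]
    have h3 : ⟪hessLM V Y w, w⟫ =
        ⟪hessLM V (q θ₀) w₂, w⟫ + ⟪(hessLM V Y - hessLM V (q θ₀)) w, w⟫ := by
      rw [ContinuousLinearMap.sub_apply, inner_sub_left, hH₀w]; ring
    have h4 : ⟪hessLM V (q θ₀) w₂, w⟫ = ⟪hessLM V (q θ₀) w₂, w₂⟫ +
        t * ⟪hessLM V (q θ₀) w₂, deriv q θ₀⟫ := by
      conv_lhs => rw [hwsplit]
      rw [inner_add_right, real_inner_smul_right]
    rw [h1, h2, h3, h4]; ring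
  -- bounds on the individual error terms
  have b2 : |t * ⟪hessLM V (q θ₀) w₂, deriv q θ₀⟫| ≤ MH * CΦ * δ * d * d := by
    rw [abs_mul]
    have h1 : |⟪hessLM V (q θ₀) w₂, deriv q θ₀⟫| ≤ MH * d := by
      calc |⟪hessLM V (q θ₀) w₂, deriv q θ₀⟫|
          ≤ ‖hessLM V (q θ₀) w₂‖ * ‖deriv q θ₀‖ := abs_real_inner_le_norm _ _
        _ = ‖hessLM V (q θ₀) w₂‖ := by rw [hu, mul_one]
        _ ≤ MH * d := hH0w₂
    calc |t| * |⟪hessLM V (q θ₀) w₂, deriv q θ₀⟫|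
        ≤ (CΦ * δ * d) * (MH * d) := mul_le_mul htb h1 (abs_nonneg _) (by positivity)
      _ = MH * CΦ * δ * d * d := by ring
  have b3 : |⟪(hessLM V Y - hessLM V (q θ₀)) w, w⟫| ≤ M3 * (CΦ * δ) * d * d := by
    calc |⟪(hessLM V Y - hessLM V (q θ₀)) w, w⟫|
        ≤ ‖(hessLM V Y - hessLM V (q θ₀)) w‖ * ‖w‖ := abs_real_inner_le_norm _ _
      _ ≤ (‖hessLM V Y - hessLM V (q θ₀)‖ * ‖w‖) * ‖w‖ :=
          mul_le_mul_of_nonneg_right (ContinuousLinearMap.le_opNorm _ _) (norm_nonneg _)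
      _ = ‖hessLM V Y - hessLM V (q θ₀)‖ * d * d := by rw [hwd]
      _ ≤ M3 * (CΦ * δ) * d * d :=
          mul_le_mul_of_nonneg_right (mul_le_mul_of_nonneg_right hHd hdpos.le) hdpos.le
  have b4 : |⟪gradient V Y, w⟫| ≤ MH * (CΦ * δ) * d := by
    calc |⟪gradient V Y, w⟫| ≤ ‖gradient V Y‖ * ‖w‖ := abs_real_inner_le_norm _ _
      _ = ‖gradient V Y‖ * d := by rw [hwd]
      _ ≤ MH * (CΦ * δ) * d := mul_le_mul_of_nonneg_right hgY hdpos.le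
  have b5 : |⟪Rem, w⟫| ≤ M3 * d * d * d := by
    calc |⟪Rem, w⟫| ≤ ‖Rem‖ * ‖w‖ := abs_real_inner_le_norm _ _
      _ = ‖Rem‖ * d := by rw [hwd]
      _ ≤ M3 * d * d * d := mul_le_mul_of_nonneg_right hRem hdpos.le
  have b6 : |⟪G Z, w⟫| ≤ MG * d := by
    calc |⟪G Z, w⟫| ≤ ‖G Z‖ * ‖w‖ := abs_real_inner_le_norm _ _
      _ = ‖G Z‖ * d := by rw [hwd]
      _ ≤ MG * d := mul_le_mul_of_nonneg_right (hMG Z hZK) hdpos.le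
  rw [hid]
  exact ipf_final lam C₀ CΦ MH M3 MG δ d t _ _ _ _ _ _ hlam hC₀ hCΦ hMH0 hM30 hMG0
    hδpos hd hδ4CΦ hδe2 hδe3 hδe4 hδe5 hδe6 htb hspec2 b2 b3 b4 b5 b6

end
end
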